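/- arXiv:1906.06544 — 6 statements merged into one kernel-verified Lean document; each statement's English description precedes it below -/
import Mathlib

section
/- In Case b1), for every ν = (ν^X,ν^Y) ∈ (ℝ^m)² with ν^X_i = ν^Y_i = 0 for all i ∉ I, writing S^X = Σ_{i∈I} ν^X_i and S^Y = Σ_{i∈I} ν^Y_i, one has 𝔪(ν) = s_X S^Y + t_X S^X if S^X ≤ S^Y, and 𝔪(ν) = s_Y S^X + t_Y S^Y if S^X ≥ S^Y. -/
open MeasureTheory ProbabilityTheory Filter Finset Topology

noncomputable section

attribute [local instance] Classical.propDecidable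

/-- The simplex `Λ` of probability vectors on `{1,…,m}`. -/
def Lam (m : ℕ) : Set (Fin m → ℝ) := {l | (∀ i, 0 ≤ l i) ∧ ∑ i, l i = 1}

/-- `f(λ^X, λ^Y) = Σ_i min (p^X_i λ^X_i) (p^Y_i λ^Y_i)`. -/
def fobj {m : ℕ} (pX pY : Fin m → ℝ) (l : (Fin m → ℝ) × (Fin m → ℝ)) : ℝ :=
  ∑ i, min (pX i * l.1 i) (pY i * l.2 i)

/-- `e_max`, the maximum of `f` over `Λ²`. -/
def emax {m : ℕ} (pX pY : Fin m → ℝ) : ℝ :=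
  sSup (fobj pX pY '' (Lam m ×ˢ Lam m))

/-- The set `U`. -/
def Uset {m : ℕ} (pX pY : Fin m → ℝ) : Set (Fin m → ℝ) :=
  {u | (∀ i, 0 ≤ u i) ∧ (∑ i, u i / pX i) ≤ 1 ∧ (∑ i, u i / pY i) ≤ 1}

/-- The set `L_U` of maximizers of `φ(u) = Σ_i u_i` over `U`. -/
def LU {m : ℕ} (pX pY : Fin m → ℝ) : Set (Fin m → ℝ) :=
  {u ∈ Uset pX pY | ∑ i, u i = emax pX pY}

/-- The set `I` of letters usable in a maximizer. -/
def Iset {m : ℕ} (pX pY : Fin m → ℝ) : Set (Fin m) :=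
  {i | ∃ u ∈ LU pX pY, 0 < u i}

/-- Case a): some maximizer saturates the `X` constraint but not the `Y` one. -/
def CaseA {m : ℕ} (pX pY : Fin m → ℝ) : Prop :=
  ∃ u ∈ LU pX pY, (∑ i, u i / pX i) = 1 ∧ (∑ i, u i / pY i) < 1

/-- Case b): every maximizer saturates both constraints. -/
def CaseB {m : ℕ} (pX pY : Fin m → ℝ) : Prop :=
  ∀ u ∈ LU pX pY, (∑ i, u i / pX i) = 1 ∧ (∑ i, u i / pY i) = 1

/-- Case b1): Case b) and the vectors `(1/p^X_i)_{i∈I}` and `(1/p^Y_i)_{i∈I}` coincide. -/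
def CaseB1 {m : ℕ} (pX pY : Fin m → ℝ) : Prop :=
  CaseB pX pY ∧ ∀ i ∈ Iset pX pY, (pX i)⁻¹ = (pY i)⁻¹

/-- Case b2): Case b) and the vectors `(1/p^X_i)_{i∈I}` and `(1/p^Y_i)_{i∈I}` differ. -/
def CaseB2 {m : ℕ} (pX pY : Fin m → ℝ) : Prop :=
  CaseB pX pY ∧ ¬ (∀ i ∈ Iset pX pY, (pX i)⁻¹ = (pY i)⁻¹)

/-- The set `K_{Λ²}` of maximizers of `f` over `Λ²`. -/
def Kset {m : ℕ} (pX pY : Fin m → ℝ) : Set ((Fin m → ℝ) × (Fin m → ℝ)) :=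
  {l ∈ Lam m ×ˢ Lam m | fobj pX pY l = emax pX pY}

/-- `p^X_max`. -/
def pXmax {m : ℕ} (pX : Fin m → ℝ) : ℝ := ⨆ i, pX i

/-- The set `J` (Case a)). -/
def Jset {m : ℕ} (pX pY : Fin m → ℝ) : Set (Fin m → ℝ) :=
  {l ∈ Lam m | (∀ i ∉ Iset pX pY, l i = 0) ∧
    (∑ i ∈ Finset.univ.filter (· ∈ Iset pX pY), l i / pY i) ≤ 1 / pXmax pX}

/-- `E = {x : Σ_i x_i = 0}`. -/
def Eset (m : ℕ) : Set (Fin m → ℝ) := {x | ∑ i, x i = 0}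

/-- `E' = {x ∈ E : x_i ≥ 0 for i ∉ I}`. -/
def E'set {m : ℕ} (pX pY : Fin m → ℝ) : Set (Fin m → ℝ) :=
  {x ∈ Eset m | ∀ i ∉ Iset pX pY, 0 ≤ x i}

/-- The function `𝔪` of Lemma 1.4. -/
def mfrak {m : ℕ} (pX pY : Fin m → ℝ) (ν : (Fin m → ℝ) × (Fin m → ℝ)) : ℝ :=
  sSup ((fun x : (Fin m → ℝ) × (Fin m → ℝ) =>
      ∑ i, min (pX i * x.1 i + ν.1 i) (pY i * x.2 i + ν.2 i)) ''
    (E'set pX pY ×ˢ E'set pX pY))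

/-- Partial sum `λ_1 + … + λ_i`. -/
def psumLe {m : ℕ} (l : Fin m → ℝ) (i : Fin m) : ℝ :=
  ∑ j ∈ Finset.univ.filter (· ≤ i), l j

/-- Partial sum `λ_1 + … + λ_{i-1}`. -/
def psumLt {m : ℕ} (l : Fin m → ℝ) (i : Fin m) : ℝ :=
  ∑ j ∈ Finset.univ.filter (· < i), l j

/-- `e(i,j)`. -/
def eij {m : ℕ} (pX pY : Fin m → ℝ) (i j : Fin m) : ℝ :=
  (pX i * pY i * (pX j - pY j) + pX j * pY j * (pY i - pX i)) /
    (pY i * pX j - pX i * pY j)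

/-- The set `S` of admissible pairs `(i,j)` in the representation of `e_max`. -/
def Sset {m : ℕ} (pX pY : Fin m → ℝ) : Set (Fin m × Fin m) :=
  {ij | pX ij.1 < pX ij.2 ∧ pY ij.2 < pY ij.1 ∧ pX ij.1 < pY ij.1 ∧ pY ij.2 < pX ij.2}

/-- `e_1 = max_i min(p^X_i, p^Y_i)`. -/
def e1 {m : ℕ} (pX pY : Fin m → ℝ) : ℝ := ⨆ i, min (pX i) (pY i)

/-- `e_2 = max_{(i,j)∈S} e(i,j)` (with `sSup ∅ = 0` when `S` is empty). -/
def e2 {m : ℕ} (pX pY : Fin m → ℝ) : ℝ :=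
  sSup ((fun ij : Fin m × Fin m => eij pX pY ij.1 ij.2) '' Sset pX pY)


/-- `s_X`: the maximum over `{i ∉ I : p^X_i ≥ e_max}` of
`p^Y_i(p^X_i − e_max)/(e_max(p^X_i − p^Y_i))`, with the convention that it is `0` when this
set is empty (in `ℝ`, `sSup ∅ = 0`). -/
def sXdef {m : ℕ} (pX pY : Fin m → ℝ) : ℝ :=
  sSup {v : ℝ | ∃ i, i ∉ Iset pX pY ∧ emax pX pY ≤ pX i ∧
    v = pY i * (pX i - emax pX pY) / (emax pX pY * (pX i - pY i))}

/-- `s_Y`, defined symmetrically. -/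
def sYdef {m : ℕ} (pX pY : Fin m → ℝ) : ℝ :=
  sSup {v : ℝ | ∃ i, i ∉ Iset pX pY ∧ emax pX pY ≤ pY i ∧
    v = pX i * (pY i - emax pX pY) / (emax pX pY * (pY i - pX i))}

section Aux

variable {m : ℕ} (pX pY : Fin m → ℝ)

lemma fobj_le_one (hpX : ∀ i, 0 < pX i) (hpXsum : ∑ i, pX i = 1)
    {l : (Fin m → ℝ) × (Fin m → ℝ)} (hl : l ∈ Lam m ×ˢ Lam m) :
    fobj pX pY l ≤ 1 := by
  obtain ⟨⟨h1pos, h1sum⟩, h2⟩ := hl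
  calc fobj pX pY l ≤ ∑ i, pX i * l.1 i := by
        apply Finset.sum_le_sum
        intro i _
        exact min_le_left _ _
    _ ≤ ∑ i, l.1 i := by
        apply Finset.sum_le_sum
        intro i _
        have hle1 : pX i ≤ 1 := by
          rw [← hpXsum]
          exact Finset.single_le_sum (fun j _ => (hpX j).le) (Finset.mem_univ i)
        exact mul_le_of_le_one_left (h1pos i) hle1
    _ = 1 := h1sum

lemma bddAbove_fobj (hpX : ∀ i, 0 < pX i) (hpXsum : ∑ i, pX i = 1) :
    BddAbove (fobj pX pY '' (Lam m ×ˢ Lam m)) := by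
  refine ⟨1, ?_⟩
  rintro z ⟨l, hl, rfl⟩
  exact fobj_le_one pX pY hpX hpXsum hl

lemma le_emax (hpX : ∀ i, 0 < pX i) (hpXsum : ∑ i, pX i = 1)
    {l : (Fin m → ℝ) × (Fin m → ℝ)} (hl : l ∈ Lam m ×ˢ Lam m) :
    fobj pX pY l ≤ emax pX pY :=
  le_csSup (bddAbove_fobj pX pY hpX hpXsum) ⟨l, hl, rfl⟩

lemma emax_pos (hm : 0 < m) (hpX : ∀ i, 0 < pX i) (hpY : ∀ i, 0 < pY i)
    (hpXsum : ∑ i, pX i = 1) : 0 < emax pX pY := by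
  set i0 : Fin m := ⟨0, hm⟩
  set d : Fin m → ℝ := fun j => if j = i0 then (1:ℝ) else 0 with hd
  have hdL : d ∈ Lam m := by
    constructor
    · intro i; simp only [d]; split <;> norm_num
    · simp [d, Finset.sum_ite_eq']
  have hval : fobj pX pY (d, d) = min (pX i0) (pY i0) := by
    unfold fobj
    have : ∀ j, min (pX j * d j) (pY j * d j)
        = if j = i0 then min (pX j) (pY j) else 0 := by
      intro j
      by_cases h : j = i0 <;> simp [d, h]
    rw [Finset.sum_congr rfl fun j _ => this j]
    simp [Finset.sum_ite_eq']
  have h1 : 0 < min (pX i0) (pY i0) := lt_min (hpX i0) (hpY i0)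
  have h2 := le_emax pX pY hpX hpXsum (l := (d, d)) ⟨hdL, hdL⟩
  rw [hval] at h2
  linarith

lemma notI_pY_lt (hm : 0 < m) (hpX : ∀ i, 0 < pX i) (hpY : ∀ i, 0 < pY i)
    (hpXsum : ∑ i, pX i = 1) {i : Fin m} (hi : i ∉ Iset pX pY)
    (hXi : emax pX pY ≤ pX i) : pY i < emax pX pY := by
  by_contra hcon
  push_neg at hcon
  set e := emax pX pY with he
  have hepos : 0 < e := emax_pos pX pY hm hpX hpY hpXsum
  set u : Fin m → ℝ := fun t => if t = i then e else 0 with hu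
  have hsum : ∑ t, u t = e := by simp [u, Finset.sum_ite_eq']
  have hdiv : ∀ w : Fin m → ℝ, ∑ t, u t / w t = e / w i := by
    intro w
    have : ∀ t, u t / w t = if t = i then e / w t else 0 := by
      intro t; by_cases h : t = i <;> simp [u, h]
    rw [Finset.sum_congr rfl fun t _ => this t]
    simp [Finset.sum_ite_eq']
  have huU : u ∈ Uset pX pY := by
    refine ⟨fun t => ?_, ?_, ?_⟩
    · simp only [u]; split <;> [exact hepos.le; exact le_rfl]
    · rw [hdiv]; rw [div_le_one (hpX i)]; exact hXi
    · rw [hdiv]; rw [div_le_one (hpY i)]; exact hcon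
  exact hi ⟨u, ⟨huU, hsum⟩, by simp [u, hepos]⟩

end Aux
section Aux2

variable {m : ℕ} (pX pY : Fin m → ℝ)

lemma min_le_comb {a b s : ℝ} (hs0 : 0 ≤ s) (hs1 : s ≤ 1) : min a b ≤ (1-s)*a + s*b := by
  nlinarith [min_le_left a b, min_le_right a b]

lemma min_le_mix {pXi pYi e s x y : ℝ} (hpXi : 0 < pXi) (hpYi : 0 < pYi) (he : 0 < e)
    (hs0 : 0 ≤ s) (hs1 : s ≤ 1) (hx : 0 ≤ x) (hy : 0 ≤ y)
    (hfeas : pYi * (pXi - e) ≤ s * (e * (pXi - pYi))) :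
    min (pXi * x) (pYi * y) ≤ (1-s)*e*x + s*e*y := by
  rcases le_total (pXi * x) (pYi * y) with h | h
  · rw [min_eq_left h]
    have h1 : pYi * (pXi * x) ≤ pYi * ((1-s)*e*x + s*e*y) := by
      nlinarith [mul_le_mul_of_nonneg_right hfeas hx,
        mul_le_mul_of_nonneg_left h (mul_nonneg hs0 he.le)]
    exact le_of_mul_le_mul_left h1 hpYi
  · rw [min_eq_right h]
    have h1 : pXi * (pYi * y) ≤ pXi * ((1-s)*e*x + s*e*y) := by
      nlinarith [mul_le_mul_of_nonneg_right hfeas hy,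
        mul_le_mul_of_nonneg_left h (mul_nonneg (sub_nonneg.2 hs1) he.le)]
    exact le_of_mul_le_mul_left h1 hpXi

lemma sum_perturb (u : Fin m → ℝ) (c : ℝ) (i k : Fin m) (hik : i ≠ k) (w : Fin m → ℝ) :
    ∑ t, (u t + c * ((if t = k then (1:ℝ) else 0) - if t = i then 1 else 0)) / w t
      = (∑ t, u t / w t) + c * (1 / w k - 1 / w i) := by
  have h : ∀ t, (u t + c * ((if t = k then (1:ℝ) else 0) - if t = i then 1 else 0)) / w t
      = u t / w t + c * ((if t = k then 1 / w t else 0) - if t = i then 1 / w t else 0) := by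
    intro t
    rcases eq_or_ne t k with rfl | h1
    · simp [Ne.symm hik]; ring
    · rcases eq_or_ne t i with rfl | h2
      · simp [h1]; ring
      · simp [h1, h2]
  rw [Finset.sum_congr rfl fun t _ => h t, Finset.sum_add_distrib, ← Finset.mul_sum,
    Finset.sum_sub_distrib, Finset.sum_ite_eq', Finset.sum_ite_eq']
  simp

lemma sum_perturb' (u : Fin m → ℝ) (c : ℝ) (i k : Fin m) (hik : i ≠ k) :
    ∑ t, (u t + c * ((if t = k then (1:ℝ) else 0) - if t = i then 1 else 0))
      = ∑ t, u t := by
  rw [Finset.sum_add_distrib, ← Finset.mul_sum, Finset.sum_sub_distrib,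
    Finset.sum_ite_eq', Finset.sum_ite_eq']
  simp

lemma perturb_nonneg (u : Fin m → ℝ) (hu : ∀ t, 0 ≤ u t) (i k : Fin m) (hik : i ≠ k) :
    ∀ t, 0 ≤ u t + u i * ((if t = k then (1:ℝ) else 0) - if t = i then 1 else 0) := by
  intro t
  rcases eq_or_ne t i with rfl | hb
  · simp [hik]
  · rcases eq_or_ne t k with rfl | ha
    · simp [hb]
      nlinarith [hu i, hu t]
    · simp [ha, hb]
      exact hu t

lemma pI_eq (hm : 0 < m) (hpX : ∀ i, 0 < pX i) (hpY : ∀ i, 0 < pY i)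
    (hpXsum : ∑ i, pX i = 1) (hB1 : CaseB1 pX pY) :
    ∀ i ∈ Iset pX pY, pX i = emax pX pY ∧ pY i = emax pX pY := by
  have hpq : ∀ j ∈ Iset pX pY, pX j = pY j := fun j hj => inv_injective (hB1.2 j hj)
  have he : 0 < emax pX pY := emax_pos pX pY hm hpX hpY hpXsum
  set e := emax pX pY with hedef
  intro i hi
  obtain ⟨u, huLU, hui⟩ := hi
  have hupos : ∀ t, 0 ≤ u t := huLU.1.1
  have husum : ∑ t, u t = e := huLU.2
  obtain ⟨hX1, hY1⟩ := hB1.1 u huLU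
  have hmemI : ∀ j, 0 < u j → j ∈ Iset pX pY := fun j hj => ⟨u, huLU, hj⟩
  have hiI : i ∈ Iset pX pY := ⟨u, huLU, hui⟩
  suffices hXi : pX i = e by
    refine ⟨hXi, ?_⟩
    rw [← hpq i hiI]; exact hXi
  by_contra hne
  rcases lt_or_gt_of_ne hne with hlt | hgt
  · have hex : ∃ j, 0 < u j ∧ e < pX j := by
      by_contra hno
      push_neg at hno
      have h1 : ∑ t, u t / e < ∑ t, u t / pX t := by
        apply Finset.sum_lt_sum
        · intro t _
          rcases eq_or_lt_of_le (hupos t) with h0 | h0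
          · rw [← h0]; simp
          · gcongr <;> first | exact hpX t | exact hno t h0 | exact he | exact (hupos t)
        · exact ⟨i, Finset.mem_univ i, div_lt_div_of_pos_left hui (hpX i) hlt⟩
      have h2 : ∑ t, u t / e = 1 := by rw [← Finset.sum_div, husum, div_self he.ne']
      rw [h2, hX1] at h1; exact lt_irrefl 1 h1
    obtain ⟨j, huj, hj⟩ := hex
    have hjI : j ∈ Iset pX pY := hmemI j huj
    have hij : i ≠ j := fun h => by rw [h] at hlt; linarith
    set u' : Fin m → ℝ :=
      fun t => u t + u i * ((if t = j then (1:ℝ) else 0) - if t = i then 1 else 0) with hu'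
    have hsum' : ∑ t, u' t = e := by rw [sum_perturb' u (u i) i j hij]; exact husum
    have hXs : ∑ t, u' t / pX t = 1 + u i * (1/pX j - 1/pX i) := by
      rw [sum_perturb u (u i) i j hij pX, hX1]
    have hYs : ∑ t, u' t / pY t = 1 + u i * (1/pX j - 1/pX i) := by
      rw [sum_perturb u (u i) i j hij pY, hY1, ← hpq i hiI, ← hpq j hjI]
    have hneg : u i * (1/pX j - 1/pX i) < 0 := by
      apply mul_neg_of_pos_of_neg hui
      have h3 : 1 / pX j < 1 / pX i := by
        apply one_div_lt_one_div_of_lt (hpX i)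
        linarith
      linarith
    have hpos' : ∀ t, 0 ≤ u' t := perturb_nonneg u hupos i j hij
    have hLU' : u' ∈ LU pX pY := ⟨⟨hpos', by rw [hXs]; linarith, by rw [hYs]; linarith⟩, hsum'⟩
    have hc := (hB1.1 u' hLU').1
    rw [hXs] at hc; linarith
  · have hex : ∃ j, 0 < u j ∧ pX j < e := by
      by_contra hno
      push_neg at hno
      have h1 : ∑ t, u t / pX t < ∑ t, u t / e := by
        apply Finset.sum_lt_sum
        · intro t _
          rcases eq_or_lt_of_le (hupos t) with h0 | h0
          · rw [← h0]; simp
          · gcongr <;> first | exact hpX t | exact hno t h0 | exact he | exact (hupos t)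
        · exact ⟨i, Finset.mem_univ i, div_lt_div_of_pos_left hui he hgt⟩
      have h2 : ∑ t, u t / e = 1 := by rw [← Finset.sum_div, husum, div_self he.ne']
      rw [h2, hX1] at h1; exact lt_irrefl 1 h1
    obtain ⟨j, huj, hj⟩ := hex
    have hjI : j ∈ Iset pX pY := hmemI j huj
    have hij : j ≠ i := fun h => by rw [h] at hj; linarith
    set u' : Fin m → ℝ :=
      fun t => u t + u j * ((if t = i then (1:ℝ) else 0) - if t = j then 1 else 0) with hu'
    have hsum' : ∑ t, u' t = e := by rw [sum_perturb' u (u j) j i hij]; exact husum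
    have hXs : ∑ t, u' t / pX t = 1 + u j * (1/pX i - 1/pX j) := by
      rw [sum_perturb u (u j) j i hij pX, hX1]
    have hYs : ∑ t, u' t / pY t = 1 + u j * (1/pX i - 1/pX j) := by
      rw [sum_perturb u (u j) j i hij pY, hY1, ← hpq i hiI, ← hpq j hjI]
    have hneg : u j * (1/pX i - 1/pX j) < 0 := by
      apply mul_neg_of_pos_of_neg huj
      have h3 : 1 / pX i < 1 / pX j := by
        apply one_div_lt_one_div_of_lt (hpX j)
        linarith
      linarith
    have hpos' : ∀ t, 0 ≤ u' t := perturb_nonneg u hupos j i hij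
    have hLU' : u' ∈ LU pX pY := ⟨⟨hpos', by rw [hXs]; linarith, by rw [hYs]; linarith⟩, hsum'⟩
    have hc := (hB1.1 u' hLU').1
    rw [hXs] at hc; linarith

end Aux2
section Aux3

variable {m : ℕ} (pX pY : Fin m → ℝ)

lemma cross_ineq (hm : 0 < m) (hpX : ∀ i, 0 < pX i) (hpY : ∀ i, 0 < pY i)
    (hpXsum : ∑ i, pX i = 1)
    {i j : Fin m} (hXj : pX j < emax pX pY) (hYj : emax pX pY < pY j)
    (hYi : pY i < emax pX pY) (hXi : emax pX pY < pX i) :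
    pY i * pX i * (pY j - pX j) + pY j * pX j * (pX i - pY i)
      ≤ emax pX pY * (pX i * pY j - pX j * pY i) := by
  set e := emax pX pY with hedef
  have he : 0 < e := emax_pos pX pY hm hpX hpY hpXsum
  have hD : 0 < pX i * pY j - pX j * pY i := by
    nlinarith [mul_lt_mul'' hXj hYi (hpX j).le (hpY i).le, mul_lt_mul'' hXi hYj he.le he.le]
  set u : ℝ := pY j * (pX i - pY i) / (pX i * pY j - pX j * pY i) with hu
  have hu0 : 0 ≤ u := by
    apply div_nonneg _ hD.le
    nlinarith [hpY j]
  have hu1 : u ≤ 1 := by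
    rw [hu, div_le_one hD]
    nlinarith [hpY i, hpX j]
  have hij : i ≠ j := fun h => by rw [h] at hXi; linarith
  set lX : Fin m → ℝ := fun t => (if t = j then u else 0) + (if t = i then 1 - u else 0) with hlX
  set lY : Fin m → ℝ := fun t => (if t = j then pX j * u / pY j else 0)
      + (if t = i then pX i * (1-u) / pY i else 0) with hlY
  have hlXmem : lX ∈ Lam m := by
    constructor
    · intro t
      rcases eq_or_ne t j with rfl | h1
      · simp [hlX, Ne.symm hij]; linarith
      · rcases eq_or_ne t i with rfl | h2
        · simp [hlX, h1]; linarith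
        · simp [hlX, h1, h2]
    · simp [hlX, Finset.sum_add_distrib, Finset.sum_ite_eq']
  have huD : u * (pX i * pY j - pX j * pY i) = pY j * (pX i - pY i) := by
    rw [hu]
    exact div_mul_cancel₀ _ hD.ne'
  have hsumY : pX j * u / pY j + pX i * (1-u) / pY i = 1 := by
    rw [div_add_div _ _ (hpY j).ne' (hpY i).ne',
      div_eq_one_iff_eq (mul_ne_zero (hpY j).ne' (hpY i).ne')]
    linear_combination (-1 : ℝ) * huD
  have hlYmem : lY ∈ Lam m := by
    constructor
    · intro t
      rcases eq_or_ne t j with rfl | h1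
      · simp [hlY, Ne.symm hij]
        exact div_nonneg (mul_nonneg (hpX _).le hu0) (hpY _).le
      · rcases eq_or_ne t i with rfl | h2
        · simp [hlY, h1]
          apply div_nonneg (mul_nonneg (hpX t).le (by linarith)) (hpY t).le
        · simp [hlY, h1, h2]
    · rw [hlY, Finset.sum_add_distrib, Finset.sum_ite_eq', Finset.sum_ite_eq']
      simpa using hsumY
  have hval : fobj pX pY (lX, lY) = pX j * u + pX i * (1 - u) := by
    unfold fobj
    have hterm : ∀ t, min (pX t * lX t) (pY t * lY t)
        = (if t = j then pX j * u else 0) + (if t = i then pX i * (1-u) else 0) := by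
      intro t
      rcases eq_or_ne t j with rfl | h1
      · have hc : pY t * (pX t * u / pY t) = pX t * u := by
          rw [mul_comm]
          exact div_mul_cancel₀ _ (hpY _).ne'
        simp [hlX, hlY, Ne.symm hij, hc]
      · rcases eq_or_ne t i with rfl | h2
        · have hc : pY t * (pX t * (1-u) / pY t) = pX t * (1-u) := by
            rw [mul_comm]
            exact div_mul_cancel₀ _ (hpY _).ne'
          simp [hlX, hlY, h1, hc]
        · simp [hlX, hlY, h1, h2]
    rw [Finset.sum_congr rfl fun t _ => hterm t, Finset.sum_add_distrib,
      Finset.sum_ite_eq', Finset.sum_ite_eq']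
    simp
  have hle : pX j * u + pX i * (1 - u) ≤ e := by
    rw [← hval]
    exact le_emax pX pY hpX hpXsum ⟨hlXmem, hlYmem⟩
  have h4 := mul_le_mul_of_nonneg_right hle hD.le
  have h5 : (pX j * u + pX i * (1 - u)) * (pX i * pY j - pX j * pY i)
      = pY i * pX i * (pY j - pX j) + pY j * pX j * (pX i - pY i) := by
    linear_combination (pX j - pX i) * huD
  rw [h5] at h4
  exact h4

lemma sX_elem_le_one (hm : 0 < m) (hpX : ∀ i, 0 < pX i) (hpY : ∀ i, 0 < pY i)
    (hpXsum : ∑ i, pX i = 1) :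
    ∀ v ∈ {v : ℝ | ∃ i, i ∉ Iset pX pY ∧ emax pX pY ≤ pX i ∧
      v = pY i * (pX i - emax pX pY) / (emax pX pY * (pX i - pY i))}, v ≤ 1 := by
  rintro v ⟨i, hiI, hXi, rfl⟩
  have he : 0 < emax pX pY := emax_pos pX pY hm hpX hpY hpXsum
  have hYi := notI_pY_lt pX pY hm hpX hpY hpXsum hiI hXi
  rw [div_le_one (by nlinarith : 0 < emax pX pY * (pX i - pY i))]
  nlinarith [hpX i, hpY i]

lemma sX_nonneg (hm : 0 < m) (hpX : ∀ i, 0 < pX i) (hpY : ∀ i, 0 < pY i)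
    (hpXsum : ∑ i, pX i = 1) : 0 ≤ sXdef pX pY := by
  apply Real.sSup_nonneg
  rintro v ⟨i, hiI, hXi, rfl⟩
  have he : 0 < emax pX pY := emax_pos pX pY hm hpX hpY hpXsum
  have hYi := notI_pY_lt pX pY hm hpX hpY hpXsum hiI hXi
  apply div_nonneg
  · nlinarith [hpY i]
  · nlinarith

lemma sX_le_one (hm : 0 < m) (hpX : ∀ i, 0 < pX i) (hpY : ∀ i, 0 < pY i)
    (hpXsum : ∑ i, pX i = 1) : sXdef pX pY ≤ 1 :=
  Real.sSup_le (sX_elem_le_one pX pY hm hpX hpY hpXsum) zero_le_one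

lemma sX_feas (hm : 0 < m) (hpX : ∀ i, 0 < pX i) (hpY : ∀ i, 0 < pY i)
    (hpXsum : ∑ i, pX i = 1) :
    ∀ j ∉ Iset pX pY,
      pY j * (pX j - emax pX pY) ≤ sXdef pX pY * (emax pX pY * (pX j - pY j)) := by
  intro j hjI
  set e := emax pX pY with hedef
  have he : 0 < e := emax_pos pX pY hm hpX hpY hpXsum
  have hbdd : BddAbove {v : ℝ | ∃ i, i ∉ Iset pX pY ∧ e ≤ pX i ∧
      v = pY i * (pX i - e) / (e * (pX i - pY i))} :=
    ⟨1, fun v hv => sX_elem_le_one pX pY hm hpX hpY hpXsum v hv⟩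
  rcases le_or_gt e (pX j) with hXj | hXj
  · have hYj := notI_pY_lt pX pY hm hpX hpY hpXsum hjI hXj
    have hL : pY j * (pX j - e)/(e*(pX j - pY j)) ≤ sXdef pX pY :=
      le_csSup hbdd ⟨j, hjI, hXj, rfl⟩
    rw [div_le_iff₀ (by nlinarith : (0:ℝ) < e*(pX j - pY j))] at hL
    exact hL
  · rcases le_or_gt (pY j) (pX j) with hYX | hYX
    · have h1 : pY j * (pX j - e) < 0 := mul_neg_of_pos_of_neg (hpY j) (by linarith)
      have h2 : 0 ≤ sXdef pX pY * (e*(pX j - pY j)) :=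
        mul_nonneg (sX_nonneg pX pY hm hpX hpY hpXsum) (by nlinarith)
      linarith
    · have hden : e * (pX j - pY j) < 0 := by nlinarith
      have hU0 : 0 ≤ pY j * (pX j - e) / (e * (pX j - pY j)) := by
        rw [← neg_div_neg_eq]
        exact div_nonneg (by nlinarith [mul_nonneg (hpY j).le (by linarith : (0:ℝ) ≤ e - pX j)])
          (by nlinarith)
      have hsU : sXdef pX pY ≤ pY j * (pX j - e) / (e * (pX j - pY j)) := by
        apply Real.sSup_le _ hU0
        rintro v ⟨i, hiI, hXi, rfl⟩
        have hYi := notI_pY_lt pX pY hm hpX hpY hpXsum hiI hXi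
        rcases le_or_gt (pY j) e with hYje | hYje
        · have hv1 : pY i * (pX i - e)/(e*(pX i - pY i)) ≤ 1 :=
            sX_elem_le_one pX pY hm hpX hpY hpXsum _ ⟨i, hiI, hXi, rfl⟩
          have hU1 : (1:ℝ) ≤ pY j * (pX j - e)/(e*(pX j - pY j)) := by
            rw [le_div_iff_of_neg hden]
            nlinarith [hpX j]
          linarith
        · rcases eq_or_lt_of_le hXi with heq | hXi'
          · have hz : pX i - e = 0 := by rw [← heq]; ring
            rw [hz]
            simpa using hU0
          · have hcr := cross_ineq pX pY hm hpX hpY hpXsum (i := i) (j := j) hXj hYje hYi hXi'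
            have hUrw : pY j * (pX j - e)/(e*(pX j - pY j)) = pY j * (e - pX j)/(e*(pY j - pX j)) := by
              rw [← neg_div_neg_eq]
              ring_nf
            rw [hUrw, div_le_div_iff₀ (by nlinarith : (0:ℝ) < e*(pX i - pY i))
              (by nlinarith : (0:ℝ) < e*(pY j - pX j))]
            nlinarith [mul_le_mul_of_nonneg_left hcr he.le]
      have h6 := mul_le_mul_of_nonpos_right hsU hden.le
      rw [div_mul_cancel₀ _ hden.ne] at h6
      exact h6

end Aux3
section Key

lemma key_caseB1 {m : ℕ} (pX pY : Fin m → ℝ) (hm : 2 ≤ m)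
    (hpX : ∀ i, 0 < pX i) (hpY : ∀ i, 0 < pY i)
    (hpXsum : ∑ i, pX i = 1) (hpYsum : ∑ i, pY i = 1)
    (hCaseB1 : CaseB1 pX pY)
    (ν : (Fin m → ℝ) × (Fin m → ℝ))
    (hν : ∀ i ∉ Iset pX pY, ν.1 i = 0 ∧ ν.2 i = 0)
    (hS : (∑ i ∈ Finset.univ.filter (· ∈ Iset pX pY), ν.1 i) ≤
        (∑ i ∈ Finset.univ.filter (· ∈ Iset pX pY), ν.2 i)) :
    mfrak pX pY ν =
      sXdef pX pY * (∑ i ∈ Finset.univ.filter (· ∈ Iset pX pY), ν.2 i) +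
        (1 - sXdef pX pY) * (∑ i ∈ Finset.univ.filter (· ∈ Iset pX pY), ν.1 i) := by
  have hm0 : 0 < m := by omega
  set e := emax pX pY with hedef
  have he : 0 < e := emax_pos pX pY hm0 hpX hpY hpXsum
  set s := sXdef pX pY with hsdef
  have hs0 : 0 ≤ s := sX_nonneg pX pY hm0 hpX hpY hpXsum
  have hs1 : s ≤ 1 := sX_le_one pX pY hm0 hpX hpY hpXsum
  have hfeas := sX_feas pX pY hm0 hpX hpY hpXsum
  have hpI := pI_eq pX pY hm0 hpX hpY hpXsum hCaseB1
  set SX := ∑ i ∈ Finset.univ.filter (· ∈ Iset pX pY), ν.1 i with hSX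
  set SY := ∑ i ∈ Finset.univ.filter (· ∈ Iset pX pY), ν.2 i with hSY
  set F : (Fin m → ℝ) × (Fin m → ℝ) → ℝ :=
    fun x => ∑ i, min (pX i * x.1 i + ν.1 i) (pY i * x.2 i + ν.2 i) with hF
  have hub : ∀ z ∈ F '' (E'set pX pY ×ˢ E'set pX pY), z ≤ s * SY + (1-s) * SX := by
    rintro z ⟨⟨xX, xY⟩, ⟨hxX, hxY⟩, rfl⟩
    obtain ⟨hxXsum, hxXpos⟩ := hxX
    obtain ⟨hxYsum, hxYpos⟩ := hxY
    have hxXsum' : ∑ i, xX i = 0 := hxXsum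
    have hxYsum' : ∑ i, xY i = 0 := hxYsum
    have hstep : ∀ i, min (pX i * xX i + ν.1 i) (pY i * xY i + ν.2 i)
        ≤ (1-s)*e*xX i + s*e*xY i
          + (if i ∈ Iset pX pY then (1-s)*ν.1 i + s*ν.2 i else 0) := by
      intro i
      by_cases hiI : i ∈ Iset pX pY
      · obtain ⟨hXe, hYe⟩ := hpI i hiI
        rw [if_pos hiI, hXe, hYe]
        exact (min_le_comb hs0 hs1).trans (le_of_eq (by ring))
      · obtain ⟨h1, h2⟩ := hν i hiI
        rw [if_neg hiI, h1, h2, add_zero, add_zero, add_zero]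
        exact min_le_mix (hpX i) (hpY i) he hs0 hs1 (hxXpos i hiI) (hxYpos i hiI)
          (hfeas i hiI)
    calc F (xX, xY)
        ≤ ∑ i, ((1-s)*e*xX i + s*e*xY i
            + (if i ∈ Iset pX pY then (1-s)*ν.1 i + s*ν.2 i else 0)) :=
          Finset.sum_le_sum fun i _ => hstep i
      _ = (1-s)*e*(∑ i, xX i) + s*e*(∑ i, xY i)
            + ∑ i ∈ Finset.univ.filter (· ∈ Iset pX pY), ((1-s)*ν.1 i + s*ν.2 i) := by
          rw [Finset.sum_add_distrib, Finset.sum_add_distrib, ← Finset.mul_sum, ← Finset.mul_sum,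
            ← Finset.sum_filter]
      _ = s * SY + (1-s) * SX := by
          rw [hxXsum', hxYsum', Finset.sum_add_distrib, ← Finset.mul_sum, ← Finset.mul_sum,
            ← hSX, ← hSY]
          ring
  have hzmem : (fun _ => (0:ℝ)) ∈ E'set pX pY :=
    ⟨by show (∑ _i : Fin m, (0:ℝ)) = 0; simp, fun i _ => le_rfl⟩
  have hzero : ((fun _ => (0:ℝ)), (fun _ => (0:ℝ))) ∈ E'set pX pY ×ˢ E'set pX pY :=
    ⟨hzmem, hzmem⟩
  have hne : (F '' (E'set pX pY ×ˢ E'set pX pY)).Nonempty := ⟨_, ⟨_, hzero, rfl⟩⟩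
  have hupper : mfrak pX pY ν ≤ s * SY + (1-s) * SX := csSup_le hne hub
  have hbdd : BddAbove (F '' (E'set pX pY ×ˢ E'set pX pY)) :=
    ⟨s * SY + (1-s) * SX, fun z hz => hub z hz⟩
  have hlow_of : ∀ x ∈ E'set pX pY ×ˢ E'set pX pY, F x ≤ mfrak pX pY ν :=
    fun x hx => le_csSup hbdd ⟨x, hx, rfl⟩
  rcases Set.eq_empty_or_nonempty (Iset pX pY) with hIe | ⟨i0, hi0⟩
  · have hfil : Finset.univ.filter (· ∈ Iset pX pY) = ∅ := by
      apply Finset.filter_false_of_mem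
      intro i _
      rw [hIe]
      exact Set.notMem_empty i
    have hSX0 : SX = 0 := by rw [hSX, hfil]; simp
    have hSY0 : SY = 0 := by rw [hSY, hfil]; simp
    have hFz : F ((fun _ => 0), (fun _ => 0)) = 0 := by
      rw [hF]
      apply Finset.sum_eq_zero
      intro i _
      have hiI : i ∉ Iset pX pY := by rw [hIe]; exact Set.notMem_empty i
      obtain ⟨h1, h2⟩ := hν i hiI
      simp [h1, h2]
    have hlow := hlow_of _ hzero
    rw [hFz] at hlow
    rw [hSX0, hSY0] at hupper ⊢
    simp only [mul_zero, add_zero] at hupper ⊢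
    linarith
  · obtain ⟨hXi0, hYi0⟩ := hpI i0 hi0
    set Δ := (SY - SX)/e with hΔ
    have hΔ0 : 0 ≤ Δ := div_nonneg (by linarith) he.le
    have hIfilsum : ∑ t ∈ Finset.univ.filter (· ∈ Iset pX pY), (ν.1 t - ν.2 t)/e
        = (SX - SY)/e := by
      rw [← Finset.sum_div, Finset.sum_sub_distrib, ← hSX, ← hSY]
    rcases eq_or_lt_of_le hs0 with hsz | hsp
    · -- s = 0; target value is SX
      set xY : Fin m → ℝ := fun t => (if t ∈ Iset pX pY then (ν.1 t - ν.2 t)/e else 0)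
          + Δ * (if t = i0 then 1 else 0) with hxY
      have hxYmem : xY ∈ E'set pX pY := by
        constructor
        · show ∑ t, xY t = 0
          simp only [hxY]
          rw [Finset.sum_add_distrib, ← Finset.mul_sum, Finset.sum_ite_eq',
            ← Finset.sum_filter, hIfilsum]
          simp only [Finset.mem_univ, if_pos, mul_one, hΔ]
          ring
        · intro t htI
          have ht0 : t ≠ i0 := fun h => htI (h ▸ hi0)
          simp [hxY, htI, ht0]
      have hval : F ((fun _ => 0), xY) = SX := by
        simp only [hF]
        rw [← Finset.sum_filter_add_sum_filter_not Finset.univ (· ∈ Iset pX pY)]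
        have h1 : ∀ i ∈ Finset.univ.filter (· ∈ Iset pX pY),
            min (pX i * 0 + ν.1 i) (pY i * xY i + ν.2 i) = ν.1 i := by
          intro i hi
          have hiI := (Finset.mem_filter.mp hi).2
          obtain ⟨hXe, hYe⟩ := hpI i hiI
          have hY : pY i * xY i + ν.2 i = ν.1 i + e*Δ*(if i = i0 then 1 else 0) := by
            simp only [hxY, if_pos hiI]
            rw [hYe]
            have hc : (ν.1 i - ν.2 i)/e * e = ν.1 i - ν.2 i := div_mul_cancel₀ _ he.ne'
            linear_combination hc
          rw [hY, mul_zero, zero_add]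
          apply min_eq_left
          split_ifs
          · nlinarith
          · simp
        have h2 : ∀ i ∈ Finset.univ.filter (fun i => ¬ (i ∈ Iset pX pY)),
            min (pX i * 0 + ν.1 i) (pY i * xY i + ν.2 i) = 0 := by
          intro i hi
          have hiI := (Finset.mem_filter.mp hi).2
          have ht0 : i ≠ i0 := fun h => hiI (h ▸ hi0)
          obtain ⟨hz1, hz2⟩ := hν i hiI
          simp [hxY, hiI, ht0, hz1, hz2]
        rw [Finset.sum_congr rfl h1, Finset.sum_congr rfl h2, ← hSX]
        simp
      have htarget : s * SY + (1-s) * SX = SX := by rw [← hsz]; ring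
      have hlow := hlow_of ((fun _ => 0), xY) ⟨hzmem, hxYmem⟩
      rw [hval] at hlow
      rw [htarget]
      exact le_antisymm (htarget ▸ hupper) hlow
    · -- s > 0; the sup defining s is attained at some k ∉ I
      have hs_eq : s = sSup {v : ℝ | ∃ i, i ∉ Iset pX pY ∧ e ≤ pX i ∧
          v = pY i * (pX i - e) / (e * (pX i - pY i))} := by
        rw [hsdef]; rfl
      have hSelfin : ({v : ℝ | ∃ i, i ∉ Iset pX pY ∧ e ≤ pX i ∧
          v = pY i * (pX i - e) / (e * (pX i - pY i))}).Finite := by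
        apply Set.Finite.subset
          (Set.finite_range (fun i : Fin m => pY i * (pX i - e)/(e*(pX i - pY i))))
        rintro v ⟨i, _, _, rfl⟩
        exact ⟨i, rfl⟩
      have hSelne : ({v : ℝ | ∃ i, i ∉ Iset pX pY ∧ e ≤ pX i ∧
          v = pY i * (pX i - e) / (e * (pX i - pY i))}).Nonempty := by
        by_contra hcon
        rw [Set.not_nonempty_iff_eq_empty] at hcon
        rw [hcon, Real.sSup_empty] at hs_eq
        linarith
      have hmem := hSelne.csSup_mem hSelfin
      rw [← hs_eq] at hmem
      obtain ⟨k, hkI, hke, hkval⟩ := hmem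
      have hYk : pY k < e := notI_pY_lt pX pY hm0 hpX hpY hpXsum hkI hke
      have hXk : e < pX k := by
        rcases eq_or_lt_of_le hke with heq | h
        · exfalso
          have hz : pX k - e = 0 := by rw [← heq]; ring
          rw [hz] at hkval
          simp at hkval
          linarith
        · exact h
      have hkpos : 0 < pX k - pY k := by linarith
      have hki0 : k ≠ i0 := fun h => hkI (h ▸ hi0)
      set a := pY k * Δ / (pX k - pY k) with ha
      have ha0 : 0 ≤ a := div_nonneg (mul_nonneg (hpY k).le hΔ0) hkpos.le
      set b := a + Δ with hb
      have hb0 : 0 ≤ b := by rw [hb]; linarith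
      have hab : pX k * a = pY k * b := by
        rw [hb, ha]
        field_simp
        ring
      set xX : Fin m → ℝ := fun t => a * ((if t = k then (1:ℝ) else 0) - if t = i0 then 1 else 0)
        with hxX
      set xY : Fin m → ℝ := fun t => (if t ∈ Iset pX pY then (ν.1 t - ν.2 t)/e else 0)
          - a * (if t = i0 then 1 else 0) + b * (if t = k then 1 else 0) with hxY
      have hxXmem : xX ∈ E'set pX pY := by
        constructor
        · show ∑ t, xX t = 0
          simp only [hxX]
          rw [← Finset.mul_sum, Finset.sum_sub_distrib, Finset.sum_ite_eq', Finset.sum_ite_eq']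
          simp
        · intro t htI
          have ht0 : t ≠ i0 := fun h => htI (h ▸ hi0)
          rcases eq_or_ne t k with rfl | h
          · have hv : xX t = a := by simp [hxX, ht0]
            rw [hv]; exact ha0
          · simp [hxX, h, ht0]
      have hxYmem : xY ∈ E'set pX pY := by
        constructor
        · show ∑ t, xY t = 0
          simp only [hxY]
          rw [Finset.sum_add_distrib, Finset.sum_sub_distrib, ← Finset.mul_sum, ← Finset.mul_sum,
            Finset.sum_ite_eq', Finset.sum_ite_eq', ← Finset.sum_filter, hIfilsum]
          simp only [Finset.mem_univ, if_pos, mul_one]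
          rw [hb, hΔ]
          ring
        · intro t htI
          have ht0 : t ≠ i0 := fun h => htI (h ▸ hi0)
          rcases eq_or_ne t k with rfl | h
          · have hv : xY t = b := by simp [hxY, htI, ht0]
            rw [hv]; exact hb0
          · simp [hxY, h, ht0, htI]
      have hval : F (xX, xY) = SX - e*a + pX k * a := by
        simp only [hF]
        rw [← Finset.sum_filter_add_sum_filter_not Finset.univ (· ∈ Iset pX pY)]
        have h1 : ∀ i ∈ Finset.univ.filter (· ∈ Iset pX pY),
            min (pX i * xX i + ν.1 i) (pY i * xY i + ν.2 i)
              = ν.1 i - e*a*(if i = i0 then 1 else 0) := by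
          intro i hi
          have hiI := (Finset.mem_filter.mp hi).2
          obtain ⟨hXe, hYe⟩ := hpI i hiI
          have hik : i ≠ k := fun h => hkI (h ▸ hiI)
          have hX : pX i * xX i + ν.1 i = ν.1 i - e*a*(if i = i0 then 1 else 0) := by
            simp only [hxX, if_neg hik]
            rw [hXe]
            ring
          have hY : pY i * xY i + ν.2 i = ν.1 i - e*a*(if i = i0 then 1 else 0) := by
            simp only [hxY, if_pos hiI, if_neg hik]
            rw [hYe]
            have hc : (ν.1 i - ν.2 i)/e * e = ν.1 i - ν.2 i := div_mul_cancel₀ _ he.ne'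
            linear_combination hc
          rw [hX, hY, min_self]
        have h2 : ∀ i ∈ Finset.univ.filter (fun i => ¬ (i ∈ Iset pX pY)),
            min (pX i * xX i + ν.1 i) (pY i * xY i + ν.2 i)
              = (if i = k then pX k * a else 0) := by
          intro i hi
          have hiI := (Finset.mem_filter.mp hi).2
          have ht0 : i ≠ i0 := fun h => hiI (h ▸ hi0)
          obtain ⟨hz1, hz2⟩ := hν i hiI
          rcases eq_or_ne i k with rfl | h
          · have hvX : pX i * xX i + ν.1 i = pX i * a := by
              simp [hxX, ht0, hz1]
            have hvY : pY i * xY i + ν.2 i = pY i * b := by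
              simp [hxY, hiI, ht0, hz2]
            rw [hvX, hvY, hab, min_self]
            simp
          · simp [hxX, hxY, h, ht0, hiI, hz1, hz2]
        rw [Finset.sum_congr rfl h1, Finset.sum_congr rfl h2, Finset.sum_sub_distrib,
          ← Finset.mul_sum, Finset.sum_ite_eq', Finset.sum_ite_eq', ← hSX]
        have hi0f : i0 ∈ Finset.univ.filter (· ∈ Iset pX pY) :=
          Finset.mem_filter.mpr ⟨Finset.mem_univ i0, hi0⟩
        have hkf : k ∈ Finset.univ.filter (fun i => ¬ (i ∈ Iset pX pY)) :=
          Finset.mem_filter.mpr ⟨Finset.mem_univ k, hkI⟩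
        rw [if_pos hi0f, if_pos hkf]
        ring
      have htarget : SX - e*a + pX k * a = s * SY + (1-s) * SX := by
        have h7 : a*(pX k - e) = s*(SY - SX) := by
          rw [hkval, ha, hΔ]
          field_simp
        linear_combination h7
      have hlow := hlow_of (xX, xY) ⟨hxXmem, hxYmem⟩
      rw [hval, htarget] at hlow
      exact le_antisymm hupper hlow

end Key
section Symm

variable {m : ℕ} (pX pY : Fin m → ℝ)

lemma emax_swap : emax pY pX = emax pX pY := by
  unfold emax
  congr 1
  ext z
  constructor
  · rintro ⟨⟨l1, l2⟩, ⟨h1, h2⟩, rfl⟩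
    exact ⟨(l2, l1), ⟨h2, h1⟩, by simp [fobj, min_comm]⟩
  · rintro ⟨⟨l1, l2⟩, ⟨h1, h2⟩, rfl⟩
    exact ⟨(l2, l1), ⟨h2, h1⟩, by simp [fobj, min_comm]⟩

lemma Uset_swap : Uset pY pX = Uset pX pY := by
  ext u
  constructor <;> rintro ⟨h1, h2, h3⟩ <;> exact ⟨h1, h3, h2⟩

lemma LU_swap : LU pY pX = LU pX pY := by
  unfold LU
  rw [Uset_swap, emax_swap]

lemma Iset_swap : Iset pY pX = Iset pX pY := by
  unfold Iset
  rw [LU_swap]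

lemma E'set_swap : E'set pY pX = E'set pX pY := by
  unfold E'set
  rw [Iset_swap]

lemma mfrak_swap (ν : (Fin m → ℝ) × (Fin m → ℝ)) :
    mfrak pY pX (ν.2, ν.1) = mfrak pX pY ν := by
  unfold mfrak
  rw [E'set_swap]
  congr 1
  ext z
  constructor
  · rintro ⟨⟨x1, x2⟩, ⟨h1, h2⟩, rfl⟩
    exact ⟨(x2, x1), ⟨h2, h1⟩, by simp [min_comm]⟩
  · rintro ⟨⟨x1, x2⟩, ⟨h1, h2⟩, rfl⟩
    exact ⟨(x2, x1), ⟨h2, h1⟩, by simp [min_comm]⟩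

lemma sXdef_swap : sXdef pY pX = sYdef pX pY := by
  unfold sXdef sYdef
  rw [Iset_swap, emax_swap]

lemma CaseB1_swap (h : CaseB1 pX pY) : CaseB1 pY pX := by
  obtain ⟨hB, hI⟩ := h
  constructor
  · intro u hu
    rw [LU_swap] at hu
    obtain ⟨h1, h2⟩ := hB u hu
    exact ⟨h2, h1⟩
  · intro i hi
    rw [Iset_swap] at hi
    exact (hI i hi).symm

end Symm
/-- **Lemma 1.4, Case b1)**: with `S^• = Σ_{i∈I} ν^•_i`,
`𝔪(ν) = s_X S^Y + t_X S^X` if `S^X ≤ S^Y` and `𝔪(ν) = s_Y S^X + t_Y S^Y` if `S^X ≥ S^Y`,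
where `t_X = 1 - s_X` and `t_Y = 1 - s_Y`. -/
theorem mfrak_caseB1
    (m : ℕ) (hm : 2 ≤ m)
    (pX pY : Fin m → ℝ)
    (hpX : ∀ i, 0 < pX i) (hpY : ∀ i, 0 < pY i)
    (hpXsum : ∑ i, pX i = 1) (hpYsum : ∑ i, pY i = 1)
    (hCaseB1 : CaseB1 pX pY)
    (ν : (Fin m → ℝ) × (Fin m → ℝ))
    (hν : ∀ i ∉ Iset pX pY, ν.1 i = 0 ∧ ν.2 i = 0) :
    ((∑ i ∈ Finset.univ.filter (· ∈ Iset pX pY), ν.1 i) ≤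
        (∑ i ∈ Finset.univ.filter (· ∈ Iset pX pY), ν.2 i) →
      mfrak pX pY ν =
        sXdef pX pY * (∑ i ∈ Finset.univ.filter (· ∈ Iset pX pY), ν.2 i) +
          (1 - sXdef pX pY) * (∑ i ∈ Finset.univ.filter (· ∈ Iset pX pY), ν.1 i)) ∧
    ((∑ i ∈ Finset.univ.filter (· ∈ Iset pX pY), ν.2 i) ≤
        (∑ i ∈ Finset.univ.filter (· ∈ Iset pX pY), ν.1 i) →
      mfrak pX pY ν =
        sYdef pX pY * (∑ i ∈ Finset.univ.filter (· ∈ Iset pX pY), ν.1 i) +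
          (1 - sYdef pX pY) * (∑ i ∈ Finset.univ.filter (· ∈ Iset pX pY), ν.2 i)) := by
  constructor
  · intro h
    exact key_caseB1 pX pY hm hpX hpY hpXsum hpYsum hCaseB1 ν hν h
  · intro h
    have hν' : ∀ i ∉ Iset pY pX, (ν.2, ν.1).1 i = 0 ∧ (ν.2, ν.1).2 i = 0 := by
      intro i hi
      rw [Iset_swap pX pY] at hi
      exact ⟨(hν i hi).2, (hν i hi).1⟩
    have hS' : (∑ i ∈ Finset.univ.filter (· ∈ Iset pY pX), (ν.2, ν.1).1 i) ≤
        (∑ i ∈ Finset.univ.filter (· ∈ Iset pY pX), (ν.2, ν.1).2 i) := by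
      simp only [Iset_swap pX pY]
      exact h
    have hswap := key_caseB1 pY pX hm hpY hpX hpYsum hpXsum (CaseB1_swap pX pY hCaseB1)
      (ν.2, ν.1) hν' hS'
    simp only [Iset_swap pX pY, sXdef_swap pX pY, mfrak_swap pX pY] at hswap
    exact hswap

end
end

section
/- In Case b2), for every ν = (ν^X,ν^Y) ∈ (ℝ^m)² with ν^X_i = ν^Y_i = 0 for all i ∉ I, one has 𝔪(ν) = Σ_{i∈I} ( (s/p^X_i) ν^X_i + (t/p^Y_i) ν^Y_i ), where (s,t) is the unique pair of reals with s/p^X_i + t/p^Y_i = 1 for all i ∈ I. -/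
open MeasureTheory ProbabilityTheory Filter Finset Topology

noncomputable section

attribute [local instance] Classical.propDecidable

/-! Write `z_i = p^X_i x^X_i + ν^X_i`: the constraint `x^X ∈ E'` becomes
`Σ z_i / p^X_i = Σ ν^X_i / p^X_i`, and likewise for `Y`. In Case b2) two letters of `I` carry
independent vectors `(1/p^X_i, 1/p^Y_i)`, so some `w` supported on `I` satisfies both equations;
taking `x` with both arguments of every `min` equal to `w` attains
`Σ w_i = s Σ w_i / p^X_i + t Σ w_i / p^Y_i`, the claimed value. Conversely, for any admissible `x`
the vector of minima minus `w` is a feasible direction of the linear program defining `L_U` at a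
maximizer that is positive on all of `I`, hence cannot increase `Σ u_i`. -/

lemma fobj_le_sum {m : ℕ} {pX : Fin m → ℝ} (pY : Fin m → ℝ) (hpX : ∀ i, 0 ≤ pX i)
    {l : (Fin m → ℝ) × (Fin m → ℝ)} (hl : l ∈ Lam m ×ˢ Lam m) :
    fobj pX pY l ≤ ∑ i, pX i := by
  obtain ⟨⟨hl0, hl1⟩, -⟩ := hl
  refine Finset.sum_le_sum fun i _ => (min_le_left _ _).trans ?_
  have : l.1 i ≤ 1 := hl1 ▸ Finset.single_le_sum (fun j _ => hl0 j) (Finset.mem_univ i)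
  nlinarith [hpX i, hl0 i]

lemma exists_mem_Lam_le_mul {m : ℕ} {p u : Fin m → ℝ} (hp : ∀ i, 0 < p i)
    (hpsum : ∑ i, p i = 1) (hu : ∀ i, 0 ≤ u i) (hup : ∑ i, u i / p i ≤ 1) :
    ∃ l ∈ Lam m, ∀ i, u i ≤ p i * l i := by
  -- `u / p`, topped up to total mass one proportionally to `p`
  refine ⟨fun i => u i / p i + (1 - ∑ j, u j / p j) * p i, ⟨fun i => ?_, ?_⟩, fun i => ?_⟩
  · have := div_nonneg (hu i) (hp i).le
    nlinarith [hp i]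
  · rw [Finset.sum_add_distrib, ← Finset.mul_sum, hpsum]
    ring
  · show u i ≤ p i * (u i / p i + (1 - ∑ j, u j / p j) * p i)
    rw [mul_add, mul_div_cancel₀ _ (hp i).ne', le_add_iff_nonneg_right]
    exact mul_nonneg (hp i).le (mul_nonneg (by linarith) (hp i).le)

lemma sum_le_emax {m : ℕ} {pX pY u : Fin m → ℝ} (hpX : ∀ i, 0 < pX i) (hpY : ∀ i, 0 < pY i)
    (hpXsum : ∑ i, pX i = 1) (hpYsum : ∑ i, pY i = 1) (hu : u ∈ Uset pX pY) :
    ∑ i, u i ≤ emax pX pY := by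
  obtain ⟨hu0, huX, huY⟩ := hu
  obtain ⟨lX, hlX, hulX⟩ := exists_mem_Lam_le_mul hpX hpXsum hu0 huX
  obtain ⟨lY, hlY, hulY⟩ := exists_mem_Lam_le_mul hpY hpYsum hu0 huY
  have hbdd : BddAbove (fobj pX pY '' (Lam m ×ˢ Lam m)) := by
    refine ⟨∑ i, pX i, ?_⟩
    rintro _ ⟨l, hl, rfl⟩
    exact fobj_le_sum pY (fun i => (hpX i).le) hl
  calc ∑ i, u i ≤ fobj pX pY (lX, lY) :=
        Finset.sum_le_sum fun i _ => le_min (hulX i) (hulY i)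
    _ ≤ emax pX pY := le_csSup hbdd ⟨(lX, lY), ⟨hlX, hlY⟩, rfl⟩

lemma convex_LU {m : ℕ} (pX pY : Fin m → ℝ) : Convex ℝ (LU pX pY) := by
  rintro u ⟨⟨hu0, huX, huY⟩, hu⟩ v ⟨⟨hv0, hvX, hvY⟩, hv⟩ a b ha hb hab
  have hlin : ∀ c : Fin m → ℝ, ∑ i, (a • u + b • v) i / c i
      = a * ∑ i, u i / c i + b * ∑ i, v i / c i := fun c => by
    simp only [Finset.mul_sum, ← Finset.sum_add_distrib, Pi.add_apply, Pi.smul_apply,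
      smul_eq_mul, add_div, mul_div_assoc]
  refine ⟨⟨fun i => ?_, ?_, ?_⟩, ?_⟩
  · simp only [Pi.add_apply, Pi.smul_apply, smul_eq_mul]
    nlinarith [hu0 i, hv0 i]
  · rw [hlin]; nlinarith
  · rw [hlin]; nlinarith
  · simp only [Pi.add_apply, Pi.smul_apply, smul_eq_mul, Finset.sum_add_distrib,
      ← Finset.mul_sum, hu, hv, ← add_mul, hab, one_mul]

lemma Convex.exists_pos_of_exists_pos {ι : Type*} [Fintype ι] {C : Set (ι → ℝ)}
    (hC : Convex ℝ C) (hne : C.Nonempty) (hnn : ∀ u ∈ C, ∀ i, 0 ≤ u i) :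
    ∃ u ∈ C, ∀ i, (∃ v ∈ C, 0 < v i) → 0 < u i := by
  classical
  set T := Finset.univ.filter fun i => ∃ v ∈ C, 0 < v i
  rcases T.eq_empty_or_nonempty with hT | hT
  · obtain ⟨u, hu⟩ := hne
    refine ⟨u, hu, fun i hi => ?_⟩
    have : i ∈ T := Finset.mem_filter.mpr ⟨Finset.mem_univ i, hi⟩
    simp [hT] at this
  choose! W hWC hWpos using fun i (hi : i ∈ T) => (Finset.mem_filter.mp hi).2
  have hcard : (0 : ℝ) < (T.card : ℝ)⁻¹ := by positivity
  refine ⟨∑ k ∈ T, (T.card : ℝ)⁻¹ • W k, hC.sum_mem (fun _ _ => hcard.le) ?_ hWC,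
    fun i hi => ?_⟩
  · rw [Finset.sum_const, nsmul_eq_mul, mul_inv_cancel₀ (by positivity)]
  · have hiT : i ∈ T := Finset.mem_filter.mpr ⟨Finset.mem_univ i, hi⟩
    rw [Finset.sum_apply]
    exact Finset.sum_pos' (fun k hk => smul_nonneg hcard.le (hnn _ (hWC k hk) i))
      ⟨i, hiT, smul_pos hcard (hWpos i hiT)⟩

lemma eq_zero_of_mem_LU_of_notMem_Iset {m : ℕ} {pX pY u : Fin m → ℝ} (hu : u ∈ LU pX pY)
    {i : Fin m} (hi : i ∉ Iset pX pY) : u i = 0 :=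
  (hu.1.1 i).eq_of_not_lt' fun hpos => hi ⟨u, hu, hpos⟩

/-- `u + ε v ∈ U` for small `ε > 0`, so `Σ v > 0` would contradict the maximality of `Σ u`. -/
lemma sum_nonpos_of_feasible_direction {m : ℕ} {pX pY u v : Fin m → ℝ}
    (hpX : ∀ i, 0 < pX i) (hpY : ∀ i, 0 < pY i)
    (hpXsum : ∑ i, pX i = 1) (hpYsum : ∑ i, pY i = 1) (hu : u ∈ LU pX pY)
    (hv : ∀ i, u i = 0 → 0 ≤ v i) (hvX : ∑ i, v i / pX i ≤ 0) (hvY : ∑ i, v i / pY i ≤ 0) :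
    ∑ i, v i ≤ 0 := by
  obtain ⟨⟨hu0, huX, huY⟩, husum⟩ := hu
  have hsmall : ∀ᶠ ε in 𝓝[>] (0 : ℝ), ∀ i, 0 ≤ u i + ε * v i := by
    refine Filter.eventually_all.mpr fun i => ?_
    rcases (hu0 i).eq_or_lt with hui | hui
    · filter_upwards [self_mem_nhdsWithin] with ε hε
      rw [← hui, zero_add]
      exact mul_nonneg (le_of_lt hε) (hv i hui.symm)
    · have hlim : Tendsto (fun ε : ℝ => u i + ε * v i) (𝓝 0) (𝓝 (u i + 0 * v i)) :=
        tendsto_const_nhds.add (tendsto_id.mul_const (v i))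
      rw [zero_mul, add_zero] at hlim
      exact nhdsWithin_le_nhds ((hlim.eventually (lt_mem_nhds hui)).mono fun _ h => h.le)
  obtain ⟨ε, hnn, hε⟩ := (hsmall.and self_mem_nhdsWithin).exists
  have hlin : ∀ c : Fin m → ℝ, ∑ i, (u i + ε * v i) / c i
      = ∑ i, u i / c i + ε * ∑ i, v i / c i := fun c => by
    simp only [Finset.mul_sum, ← Finset.sum_add_distrib, add_div, mul_div_assoc]
  have hmem : (fun i => u i + ε * v i) ∈ Uset pX pY :=
    ⟨hnn, by rw [hlin]; nlinarith [hε], by rw [hlin]; nlinarith [hε]⟩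
  have := sum_le_emax hpX hpY hpXsum hpYsum hmem
  rw [Finset.sum_add_distrib, ← Finset.mul_sum, husum] at this
  nlinarith [hε]

lemma exists_mem_LU_pos {m : ℕ} {pX pY : Fin m → ℝ} (hLU : (LU pX pY).Nonempty) :
    ∃ u ∈ LU pX pY, ∀ i ∈ Iset pX pY, 0 < u i :=
  (convex_LU pX pY).exists_pos_of_exists_pos hLU fun _ hu => hu.1.1

lemma CaseB2.exists_inv_mul_ne {m : ℕ} {pX pY : Fin m → ℝ} (h : CaseB2 pX pY) :
    ∃ i ∈ Iset pX pY, ∃ j ∈ Iset pX pY, (pX i)⁻¹ * (pY j)⁻¹ ≠ (pX j)⁻¹ * (pY i)⁻¹ := by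
  obtain ⟨hB, hne⟩ := h
  push Not at hne
  obtain ⟨i, hiI, hi⟩ := hne
  refine ⟨i, hiI, ?_⟩
  by_contra! hall
  obtain ⟨u, hu, -⟩ := hiI
  obtain ⟨hX, hY⟩ := hB u hu
  apply hi
  calc (pX i)⁻¹ = (pX i)⁻¹ * ∑ j, u j / pY j := by rw [hY, mul_one]
    _ = (∑ j, u j / pX j) * (pY i)⁻¹ := by
      rw [Finset.mul_sum, Finset.sum_mul]
      refine Finset.sum_congr rfl fun j _ => ?_
      by_cases hj : j ∈ Iset pX pY
      · simp only [div_eq_mul_inv]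
        linear_combination u j * hall j hj
      · simp [eq_zero_of_mem_LU_of_notMem_Iset hu hj]
    _ = (pY i)⁻¹ := by rw [hX, one_mul]

lemma exists_sum_mul_eq_of_mul_ne {ι : Type*} [Fintype ι] {f g : ι → ℝ} {i j : ι}
    (hij : f i * g j ≠ f j * g i) (a b : ℝ) :
    ∃ w : ι → ℝ, (∀ k, k ≠ i → k ≠ j → w k = 0) ∧
      ∑ k, w k * f k = a ∧ ∑ k, w k * g k = b := by
  classical
  have hD : f i * g j - f j * g i ≠ 0 := sub_ne_zero.mpr hij
  have hsum : ∀ μ ρ : ℝ, ∀ c : ι → ℝ,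
      ∑ k, (Pi.single i μ + Pi.single j ρ : ι → ℝ) k * c k = μ * c i + ρ * c j := by
    intro μ ρ c
    simp [add_mul, Finset.sum_add_distrib, Pi.single_apply]
  refine ⟨Pi.single i ((a * g j - b * f j) / (f i * g j - f j * g i)) +
      Pi.single j ((b * f i - a * g i) / (f i * g j - f j * g i)),
    fun k hki hkj => by simp [hki, hkj], ?_, ?_⟩ <;>
  · rw [hsum, div_mul_eq_mul_div, div_mul_eq_mul_div, ← add_div, div_eq_iff hD]
    ring

lemma CaseB2.exists_Iset_supported {m : ℕ} {pX pY : Fin m → ℝ} (h : CaseB2 pX pY) (a b : ℝ) :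
    ∃ w : Fin m → ℝ, (∀ i ∉ Iset pX pY, w i = 0) ∧
      ∑ i, w i / pX i = a ∧ ∑ i, w i / pY i = b := by
  obtain ⟨i, hi, j, hj, hij⟩ := h.exists_inv_mul_ne
  obtain ⟨w, hw, hwa, hwb⟩ :=
    exists_sum_mul_eq_of_mul_ne (f := fun k => (pX k)⁻¹) (g := fun k => (pY k)⁻¹) hij a b
  exact ⟨w, fun k hk => hw k (fun h => hk (h ▸ hi)) (fun h => hk (h ▸ hj)),
    by simpa only [div_eq_mul_inv] using hwa, by simpa only [div_eq_mul_inv] using hwb⟩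

def mobj {m : ℕ} (pX pY : Fin m → ℝ) (ν x : (Fin m → ℝ) × (Fin m → ℝ)) : ℝ :=
  ∑ i, min (pX i * x.1 i + ν.1 i) (pY i * x.2 i + ν.2 i)

lemma sum_mul_add_div {m : ℕ} {p : Fin m → ℝ} (hp : ∀ i, p i ≠ 0) (x c : Fin m → ℝ) :
    ∑ i, (p i * x i + c i) / p i = ∑ i, x i + ∑ i, c i / p i := by
  rw [← Finset.sum_add_distrib]
  exact Finset.sum_congr rfl fun i _ => by rw [add_div, mul_div_cancel_left₀ _ (hp i)]

section Supported

variable {m : ℕ} {pX pY w : Fin m → ℝ} {ν : (Fin m → ℝ) × (Fin m → ℝ)}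

lemma exists_mobj_eq_sum (hpX : ∀ i, 0 < pX i) (hpY : ∀ i, 0 < pY i)
    (hw : ∀ i ∉ Iset pX pY, w i = 0) (hwX : ∑ i, w i / pX i = ∑ i, ν.1 i / pX i)
    (hwY : ∑ i, w i / pY i = ∑ i, ν.2 i / pY i)
    (hν : ∀ i ∉ Iset pX pY, ν.1 i = 0 ∧ ν.2 i = 0) :
    ∃ x ∈ E'set pX pY ×ˢ E'set pX pY, mobj pX pY ν x = ∑ i, w i := by
  have hsolve : ∀ {p c : Fin m → ℝ}, (∀ i, 0 < p i) → ∑ i, w i / p i = ∑ i, c i / p i →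
      (∀ i ∉ Iset pX pY, c i = 0) →
      (fun i => (w i - c i) / p i) ∈ E'set pX pY ∧ ∀ i, p i * ((w i - c i) / p i) + c i = w i := by
    intro p c hp hwc hc
    refine ⟨⟨?_, fun i hi => by simp [hw i hi, hc i hi]⟩,
      fun i => by rw [mul_div_cancel₀ _ (hp i).ne', sub_add_cancel]⟩
    show ∑ i, (w i - c i) / p i = 0
    simp only [sub_div, Finset.sum_sub_distrib, hwc, sub_self]
  obtain ⟨hx1, hx1w⟩ := hsolve hpX hwX fun i hi => (hν i hi).1
  obtain ⟨hx2, hx2w⟩ := hsolve hpY hwY fun i hi => (hν i hi).2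
  exact ⟨(_, _), ⟨hx1, hx2⟩, by simp only [mobj, hx1w, hx2w, min_self]⟩

lemma mobj_le_sum (hpX : ∀ i, 0 < pX i) (hpY : ∀ i, 0 < pY i)
    (hpXsum : ∑ i, pX i = 1) (hpYsum : ∑ i, pY i = 1) (hLU : (LU pX pY).Nonempty)
    (hw : ∀ i ∉ Iset pX pY, w i = 0) (hwX : ∑ i, w i / pX i = ∑ i, ν.1 i / pX i)
    (hwY : ∑ i, w i / pY i = ∑ i, ν.2 i / pY i)
    (hν : ∀ i ∉ Iset pX pY, ν.1 i = 0 ∧ ν.2 i = 0)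
    {x : (Fin m → ℝ) × (Fin m → ℝ)} (hx : x ∈ E'set pX pY ×ˢ E'set pX pY) :
    mobj pX pY ν x ≤ ∑ i, w i := by
  obtain ⟨u, hu, hupos⟩ := exists_mem_LU_pos hLU
  obtain ⟨⟨hx1, hx1I⟩, hx2, hx2I⟩ := hx
  set z : Fin m → ℝ := fun i => min (pX i * x.1 i + ν.1 i) (pY i * x.2 i + ν.2 i)
  have hgap : ∀ {p y c : Fin m → ℝ}, (∀ i, 0 < p i) → ∑ i, y i = 0 →
      ∑ i, w i / p i = ∑ i, c i / p i → (∀ i, z i ≤ p i * y i + c i) →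
      ∑ i, (z i - w i) / p i ≤ 0 := by
    intro p y c hp hy hwc hz
    have : ∑ i, z i / p i ≤ ∑ i, (p i * y i + c i) / p i :=
      Finset.sum_le_sum fun i _ => div_le_div_of_nonneg_right (hz i) (hp i).le
    rw [sum_mul_add_div (fun i => (hp i).ne'), hy, zero_add, ← hwc] at this
    rw [Finset.sum_congr rfl fun i _ => sub_div (z i) (w i) (p i), Finset.sum_sub_distrib]
    linarith
  have hdir : ∀ i, u i = 0 → 0 ≤ z i - w i := by
    intro i hui
    have hi : i ∉ Iset pX pY := fun hi => (hupos i hi).ne' hui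
    show 0 ≤ min (pX i * x.1 i + ν.1 i) (pY i * x.2 i + ν.2 i) - w i
    rw [hw i hi, sub_zero, (hν i hi).1, (hν i hi).2, add_zero, add_zero]
    exact le_min (mul_nonneg (hpX i).le (hx1I i hi)) (mul_nonneg (hpY i).le (hx2I i hi))
  have := sum_nonpos_of_feasible_direction hpX hpY hpXsum hpYsum hu hdir
    (hgap hpX hx1 hwX fun i => min_le_left _ _) (hgap hpY hx2 hwY fun i => min_le_right _ _)
  rwa [Finset.sum_sub_distrib, sub_nonpos] at this

end Supported

lemma sum_eq_of_Iset_supported {m : ℕ} {pX pY w : Fin m → ℝ} {s t : ℝ}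
    (hst : ∀ i ∈ Iset pX pY, s / pX i + t / pY i = 1) (hw : ∀ i ∉ Iset pX pY, w i = 0) :
    ∑ i, w i = s * ∑ i, w i / pX i + t * ∑ i, w i / pY i := by
  rw [Finset.mul_sum, Finset.mul_sum, ← Finset.sum_add_distrib]
  refine Finset.sum_congr rfl fun i _ => ?_
  by_cases hi : i ∈ Iset pX pY
  · linear_combination -w i * hst i hi
  · simp [hw i hi]

theorem mfrak_caseB2_general
    (m : ℕ)
    (pX pY : Fin m → ℝ)
    (hpX : ∀ i, 0 < pX i) (hpY : ∀ i, 0 < pY i)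
    (hpXsum : ∑ i, pX i = 1) (hpYsum : ∑ i, pY i = 1)
    (hCaseB2 : CaseB2 pX pY)
    (s t : ℝ) (hst : ∀ i ∈ Iset pX pY, s / pX i + t / pY i = 1)
    (ν : (Fin m → ℝ) × (Fin m → ℝ))
    (hν : ∀ i ∉ Iset pX pY, ν.1 i = 0 ∧ ν.2 i = 0) :
    mfrak pX pY ν =
      ∑ i ∈ Finset.univ.filter (· ∈ Iset pX pY),
        (s / pX i * ν.1 i + t / pY i * ν.2 i) := by
  obtain ⟨w, hw, hwX, hwY⟩ :=
    hCaseB2.exists_Iset_supported (∑ i, ν.1 i / pX i) (∑ i, ν.2 i / pY i)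
  have hLU : (LU pX pY).Nonempty := by
    obtain ⟨-, ⟨u, hu, -⟩, -⟩ := hCaseB2.exists_inv_mul_ne
    exact ⟨u, hu⟩
  obtain ⟨x, hx, hxw⟩ := exists_mobj_eq_sum hpX hpY hw hwX hwY hν
  have hmax : mfrak pX pY ν = ∑ i, w i := IsGreatest.csSup_eq ⟨⟨x, hx, hxw⟩, by
    rintro _ ⟨y, hy, rfl⟩
    exact mobj_le_sum hpX hpY hpXsum hpYsum hLU hw hwX hwY hν hy⟩
  rw [hmax, sum_eq_of_Iset_supported hst hw, hwX, hwY, Finset.sum_filter, Finset.mul_sum,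
    Finset.mul_sum, ← Finset.sum_add_distrib]
  refine Finset.sum_congr rfl fun i _ => ?_
  split_ifs with hi
  · ring
  · simp [(hν i hi).1, (hν i hi).2]

/-- **Lemma 1.4, Case b2)**: for the (unique) pair `(s,t)` with `s/p^X_i + t/p^Y_i = 1`
for all `i ∈ I`, one has `𝔪(ν) = Σ_{i∈I} (s/p^X_i) ν^X_i + (t/p^Y_i) ν^Y_i`. -/
theorem mfrak_caseB2
    (m : ℕ) (hm : 2 ≤ m)
    (pX pY : Fin m → ℝ)
    (hpX : ∀ i, 0 < pX i) (hpY : ∀ i, 0 < pY i)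
    (hpXsum : ∑ i, pX i = 1) (hpYsum : ∑ i, pY i = 1)
    (hCaseB2 : CaseB2 pX pY)
    (s t : ℝ) (hst : ∀ i ∈ Iset pX pY, s / pX i + t / pY i = 1)
    (ν : (Fin m → ℝ) × (Fin m → ℝ))
    (hν : ∀ i ∉ Iset pX pY, ν.1 i = 0 ∧ ν.2 i = 0) :
    mfrak pX pY ν =
      ∑ i ∈ Finset.univ.filter (· ∈ Iset pX pY),
        (s / pX i * ν.1 i + t / pY i * ν.2 i) :=
  mfrak_caseB2_general m pX pY hpX hpY hpXsum hpYsum hCaseB2 s t hst ν hν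

end
end

section
/- There exist indices i, j ∈ {1,…,m} and λ = (λ^X,λ^Y) ∈ K_{Λ²} such that λ^X_k = λ^Y_k = 0 for all k ∉ {i,j}. (Two letters suffice to reach the maximum of f.) -/
open MeasureTheory ProbabilityTheory Filter Finset Topology

noncomputable section

attribute [local instance] Classical.propDecidable

/-!
Put `u_i = min (p^X_i λ^X_i) (p^Y_i λ^Y_i)`. Then `f(λ) = Σ u_i` with `u` in the polytope `U` cut out
by `u ≥ 0`, `Σ u_i / p^X_i ≤ 1`, `Σ u_i / p^Y_i ≤ 1`; conversely every `u ∈ U` is dominated by some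
`λ ∈ Λ²` supported on the support of `u` plus one letter that takes up the slack. So it suffices to
find a maximizer of `Σ u_i` on `U` with at most two letters. If a maximizer has three letters in its
support, the two linear constraints leave a nonzero direction `d` on those letters that fixes both
constraint values; after a sign change `Σ d_i ≥ 0`, and the positivity of the weights `1 / p^X_i`
forces a negative entry, so one can move along `d` until a letter leaves the support without
decreasing `Σ u_i`. A maximizer of minimal support therefore uses at most two letters.
-/

section Support

variable {ι : Type*} [Fintype ι]

theorem exists_ne_zero_sum_smul_eq_zero_of_finrank_lt {V : Type*}
    [AddCommGroup V] [Module ℝ V] [FiniteDimensional ℝ V] (v : ι → V) {s : Finset ι}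
    (hs : Module.finrank ℝ V < #s) :
    ∃ d : ι → ℝ, d ≠ 0 ∧ (∀ l ∉ s, d l = 0) ∧ ∑ l, d l • v l = 0 := by
  have hdep : ¬ LinearIndepOn ℝ v (s : Set ι) := fun h => by
    simpa using h.fintype_card_le_finrank.trans_lt hs
  obtain ⟨d, hds, hdv, hd0⟩ := linearDepOn_iff'.1 hdep
  refine ⟨d, fun h => hd0 (DFunLike.coe_injective h), fun l hl => ?_, ?_⟩
  · exact Finsupp.notMem_support_iff.1 fun h => hl (hds h)
  · rwa [Finsupp.linearCombination_apply, Finsupp.sum_fintype _ _ (by simp)] at hdv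

theorem exists_neg_of_sum_div_eq_zero {p d : ι → ℝ} (hp : ∀ l, 0 < p l) (hd : d ≠ 0)
    (hdp : ∑ l, d l / p l = 0) : ∃ l, d l < 0 := by
  by_contra! hnn
  have hzero := (sum_eq_zero_iff_of_nonneg fun l _ => div_nonneg (hnn l) (hp l).le).1 hdp
  exact hd (funext fun l => by simpa [(hp l).ne'] using hzero l (mem_univ l))

theorem exists_direction_of_two_lt_card_support {p q u : ι → ℝ} (hp : ∀ l, 0 < p l)
    (h : 2 < #{l | u l ≠ 0}) :
    ∃ d : ι → ℝ, (∀ l, u l = 0 → d l = 0) ∧ ∑ l, d l / p l = 0 ∧ ∑ l, d l / q l = 0 ∧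
      0 ≤ ∑ l, d l ∧ ∃ l, d l < 0 := by
  obtain ⟨d, hd0, hds, hdv⟩ := exists_ne_zero_sum_smul_eq_zero_of_finrank_lt
    (fun l => ((p l)⁻¹, (q l)⁻¹)) (h.trans_eq' (by simp))
  have hdu : ∀ l, u l = 0 → d l = 0 := fun l hl => hds l (by simpa using hl)
  have hdp : ∑ l, d l / p l = 0 := by
    simpa [div_eq_mul_inv, Prod.fst_sum] using congrArg Prod.fst hdv
  have hdq : ∑ l, d l / q l = 0 := by
    simpa [div_eq_mul_inv, Prod.snd_sum] using congrArg Prod.snd hdv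
  rcases le_total 0 (∑ l, d l) with hsum | hsum
  · exact ⟨d, hdu, hdp, hdq, hsum, exists_neg_of_sum_div_eq_zero hp hd0 hdp⟩
  · exact ⟨-d, fun l hl => by simp [hdu l hl], by simp [neg_div, hdp], by simp [neg_div, hdq],
      by simpa using hsum,
      exists_neg_of_sum_div_eq_zero hp (neg_ne_zero.2 hd0) (by simp [neg_div, hdp])⟩

theorem exists_card_support_lt_of_direction {u d : ι → ℝ} (hu : 0 ≤ u)
    (hdu : ∀ l, u l = 0 → d l = 0) (hneg : ∃ l, d l < 0) :
    ∃ t : ℝ, 0 ≤ t ∧ 0 ≤ u + t • d ∧ #{l | (u + t • d) l ≠ 0} < #{l | u l ≠ 0} := by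
  obtain ⟨l₀, hl₀, hmin⟩ := exists_min_image ({l | d l < 0} : Finset ι) (fun l => u l / -d l)
    (let ⟨l, hl⟩ := hneg; ⟨l, by simpa using hl⟩)
  simp only [mem_filter, mem_univ, true_and] at hl₀ hmin
  set t := u l₀ / -d l₀
  have ht : 0 ≤ t := div_nonneg (hu l₀) (by linarith)
  have hv₀ : (u + t • d) l₀ = 0 := by
    simp only [Pi.add_apply, Pi.smul_apply, smul_eq_mul, t]
    rw [div_neg, neg_mul, div_mul_cancel₀ _ hl₀.ne, add_neg_cancel]
  refine ⟨t, ht, fun l => ?_, card_lt_card ?_⟩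
  · rcases le_or_gt 0 (d l) with hd | hd
    · simpa using add_nonneg (hu l) (mul_nonneg ht hd)
    · have := (le_div_iff₀ (neg_pos.2 hd)).1 (hmin l hd)
      simp only [Pi.zero_apply, Pi.add_apply, Pi.smul_apply, smul_eq_mul]
      linarith
  · refine (ssubset_iff_of_subset fun l => ?_).2 ⟨l₀, ?_, ?_⟩
    · simp only [mem_filter, mem_univ, true_and]
      intro hv hul
      simp [hul, hdu l hul] at hv
    · simpa using fun h => hl₀.ne (hdu l₀ h)
    · simpa using hv₀

theorem exists_card_support_lt {p q u : ι → ℝ} (hp : ∀ l, 0 < p l) (hu : 0 ≤ u)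
    (h : 2 < #{l | u l ≠ 0}) :
    ∃ v : ι → ℝ, 0 ≤ v ∧ ∑ l, v l / p l = ∑ l, u l / p l ∧ ∑ l, v l / q l = ∑ l, u l / q l ∧
      ∑ l, u l ≤ ∑ l, v l ∧ #{l | v l ≠ 0} < #{l | u l ≠ 0} := by
  obtain ⟨d, hdu, hdp, hdq, hdsum, hneg⟩ := exists_direction_of_two_lt_card_support (q := q) hp h
  obtain ⟨t, ht, hv, hcard⟩ := exists_card_support_lt_of_direction hu hdu hneg
  have hsum : ∀ r : ι → ℝ, ∑ l, (u + t • d) l / r l = ∑ l, u l / r l + t * ∑ l, d l / r l :=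
    fun r => by simp only [mul_sum, ← sum_add_distrib, Pi.add_apply, Pi.smul_apply, smul_eq_mul,
      add_div, mul_div_assoc]
  refine ⟨u + t • d, hv, by rw [hsum, hdp, mul_zero, add_zero],
    by rw [hsum, hdq, mul_zero, add_zero], ?_, hcard⟩
  simpa [sum_add_distrib, ← mul_sum] using mul_nonneg ht hdsum

end Support

theorem Finset.exists_subset_pair_of_card_le_two {α : Type*} [Nonempty α] {s : Finset α}
    (h : #s ≤ 2) : ∃ i j, s ⊆ {i, j} := by
  rcases s.eq_empty_or_nonempty with rfl | ⟨i, hi⟩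
  · obtain ⟨i⟩ := ‹Nonempty α›
    exact ⟨i, i, empty_subset _⟩
  · obtain ⟨j, hj⟩ := card_le_one_iff_subset_singleton.1
      (by rw [card_erase_of_mem hi]; omega : #(s.erase i) ≤ 1)
    exact ⟨i, j, subset_insert_iff.2 hj⟩

section Maximizers

variable {m : ℕ} {pX pY : Fin m → ℝ}

theorem isCompact_Uset (hpX : ∀ i, 0 < pX i) : IsCompact (Uset pX pY) := by
  refine (isCompact_Icc (a := 0) (b := pX)).of_isClosed_subset ?_ fun u hu => ⟨hu.1, fun i => ?_⟩
  · have hsum : ∀ p : Fin m → ℝ, IsClosed {u : Fin m → ℝ | ∑ i, u i / p i ≤ 1} := fun p =>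
      isClosed_le (by fun_prop) continuous_const
    exact (isClosed_Ici (a := 0)).inter ((hsum pX).inter (hsum pY))
  · have hle : u i / pX i ≤ 1 := (single_le_sum (f := fun l => u l / pX l)
      (fun l _ => div_nonneg (hu.1 l) (hpX l).le) (mem_univ i)).trans hu.2.1
    exact (div_le_one (hpX i)).1 hle

theorem min_mem_Uset (hpX : ∀ i, 0 < pX i) (hpY : ∀ i, 0 < pY i) {x y : Fin m → ℝ}
    (hx : x ∈ Lam m) (hy : y ∈ Lam m) :
    (fun l => min (pX l * x l) (pY l * y l)) ∈ Uset pX pY := by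
  have hbound : ∀ p z : Fin m → ℝ, (∀ l, 0 < p l) → z ∈ Lam m →
      ∀ w : Fin m → ℝ, (∀ l, w l ≤ p l * z l) → ∑ l, w l / p l ≤ 1 := fun p z hp hz w hw =>
    hz.2 ▸ sum_le_sum fun l _ => (div_le_iff₀' (hp l)).2 (hw l)
  exact ⟨fun l => le_min (mul_nonneg (hpX l).le (hx.1 l)) (mul_nonneg (hpY l).le (hy.1 l)),
    hbound pX x hpX hx _ fun l => min_le_left _ _, hbound pY y hpY hy _ fun l => min_le_right _ _⟩

theorem exists_isMaxOn_Uset_card_support_le_two (hpX : ∀ i, 0 < pX i) :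
    ∃ u ∈ Uset pX pY, IsMaxOn (fun v => ∑ i, v i) (Uset pX pY) u ∧ #{l | u l ≠ 0} ≤ 2 := by
  obtain ⟨u₀, hu₀, hmax₀⟩ := (isCompact_Uset (pY := pY) hpX).exists_isMaxOn
    ⟨0, fun _ => le_rfl, by simp, by simp⟩ (f := fun v => ∑ i, v i) (by fun_prop)
  obtain ⟨u, ⟨hu, hmax⟩, hmin⟩ := (InvImage.wf (fun u : Fin m → ℝ => #{l | u l ≠ 0})
    wellFounded_lt).has_min {u | u ∈ Uset pX pY ∧ IsMaxOn (fun v => ∑ i, v i) (Uset pX pY) u}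
    ⟨u₀, hu₀, hmax₀⟩
  refine ⟨u, hu, hmax, not_lt.1 fun h => ?_⟩
  obtain ⟨v, hv, hvX, hvY, hle, hcard⟩ := exists_card_support_lt (q := pY) hpX hu.1 h
  have hvU : v ∈ Uset pX pY := ⟨hv, hvX ▸ hu.2.1, hvY ▸ hu.2.2⟩
  exact hmin v ⟨hvU, fun w hw => (hmax hw).trans hle⟩ hcard

theorem mem_Kset_of_isMaxOn (hpX : ∀ i, 0 < pX i) (hpY : ∀ i, 0 < pY i) {u : Fin m → ℝ}
    (hmax : IsMaxOn (fun v => ∑ i, v i) (Uset pX pY) u) {l : (Fin m → ℝ) × (Fin m → ℝ)}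
    (hl : l ∈ Lam m ×ˢ Lam m) (hle : ∑ i, u i ≤ fobj pX pY l) : l ∈ Kset pX pY := by
  have hbound : ∀ z ∈ fobj pX pY '' (Lam m ×ˢ Lam m), z ≤ ∑ i, u i := by
    rintro _ ⟨⟨x, y⟩, ⟨hx, hy⟩, rfl⟩
    exact hmax (min_mem_Uset hpX hpY hx hy)
  refine ⟨hl, le_antisymm (le_csSup ⟨_, hbound⟩ (Set.mem_image_of_mem _ hl)) ?_⟩
  exact (csSup_le ⟨_, Set.mem_image_of_mem _ hl⟩ hbound).trans hle

end Maximizers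

def addSlack {m : ℕ} (p u : Fin m → ℝ) (i : Fin m) : Fin m → ℝ :=
  u / p + Pi.single i (1 - ∑ k, u k / p k)

section addSlack

variable {m : ℕ} {p u : Fin m → ℝ} {i l : Fin m}

theorem addSlack_mem_Lam (hp : ∀ l, 0 < p l) (hu : 0 ≤ u) (h : ∑ l, u l / p l ≤ 1) :
    addSlack p u i ∈ Lam m :=
  ⟨fun l => add_nonneg (div_nonneg (hu l) (hp l).le)
      ((Pi.single_nonneg (α := fun _ => ℝ)).2 (sub_nonneg.2 h) l),
    by simp [addSlack, sum_add_distrib]⟩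

theorem le_mul_addSlack (hp : ∀ l, 0 < p l) (h : ∑ l, u l / p l ≤ 1) :
    u l ≤ p l * addSlack p u i l :=
  calc u l = p l * (u l / p l) := (mul_div_cancel₀ _ (hp l).ne').symm
    _ ≤ p l * addSlack p u i l := mul_le_mul_of_nonneg_left
      (le_add_of_nonneg_right ((Pi.single_nonneg (α := fun _ => ℝ)).2 (sub_nonneg.2 h) l))
      (hp l).le

theorem addSlack_apply_of_ne (hl : l ≠ i) (hu : u l = 0) : addSlack p u i l = 0 := by
  simp [addSlack, hl, hu]

end addSlack

theorem two_letters_suffice_general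
    (m : ℕ) (hm : 2 ≤ m)
    (pX pY : Fin m → ℝ)
    (hpX : ∀ i, 0 < pX i) (hpY : ∀ i, 0 < pY i) :
    ∃ i j : Fin m, ∃ l ∈ Kset pX pY,
      ∀ k, k ≠ i → k ≠ j → l.1 k = 0 ∧ l.2 k = 0 := by
  obtain ⟨u, hu, hmax, hcard⟩ := exists_isMaxOn_Uset_card_support_le_two (pY := pY) hpX
  have : Nonempty (Fin m) := ⟨⟨0, by omega⟩⟩
  obtain ⟨i, j, hij⟩ := exists_subset_pair_of_card_le_two hcard
  have hl : (addSlack pX u i, addSlack pY u i) ∈ Lam m ×ˢ Lam m :=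
    ⟨addSlack_mem_Lam hpX hu.1 hu.2.1, addSlack_mem_Lam hpY hu.1 hu.2.2⟩
  have hle : ∑ k, u k ≤ fobj pX pY (addSlack pX u i, addSlack pY u i) :=
    sum_le_sum fun _ _ => le_min (le_mul_addSlack hpX hu.2.1) (le_mul_addSlack hpY hu.2.2)
  refine ⟨i, j, _, mem_Kset_of_isMaxOn hpX hpY hmax hl hle, fun k hki hkj => ?_⟩
  have huk : u k = 0 := by
    by_contra h
    simpa [hki, hkj] using hij (by simpa using h : k ∈ ({l | u l ≠ 0} : Finset (Fin m)))
  exact ⟨addSlack_apply_of_ne hki huk, addSlack_apply_of_ne hki huk⟩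

/-- **Lemma 1.5**: two letters suffice to reach the maximum of `f`: there exist
`i, j ∈ {1,…,m}` and a maximizer `λ ∈ K_{Λ²}` supported on `{i, j}`. -/
theorem two_letters_suffice
    (m : ℕ) (hm : 2 ≤ m)
    (pX pY : Fin m → ℝ)
    (hpX : ∀ i, 0 < pX i) (hpY : ∀ i, 0 < pY i)
    (hpXsum : ∑ i, pX i = 1) (hpYsum : ∑ i, pY i = 1) :
    ∃ i j : Fin m, ∃ l ∈ Kset pX pY,
      ∀ k, k ≠ i → k ≠ j → l.1 k = 0 ∧ l.2 k = 0 :=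
  two_letters_suffice_general m hm pX pY hpX hpY
end
end

section
/- e_max = max( max_{1≤i≤m} min(p^X_i, p^Y_i), max_{(i,j)∈S} e(i,j) ), where S is the set of pairs (i,j) with p^X_i < p^X_j, p^Y_i > p^Y_j, p^X_i < p^Y_i and p^Y_j < p^X_j, and e(i,j) = (p^X_i p^Y_i (p^X_j − p^Y_j) + p^X_j p^Y_j (p^Y_i − p^X_i)) / (p^Y_i p^X_j − p^X_i p^Y_j); when S is empty, e_max = max_{1≤i≤m} min(p^X_i, p^Y_i). -/
/-!
The lower bound `e_max ≥ max(e_1, e_2)` comes from explicit points of `Λ²`: a point mass at `i`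
gives `min(p^X_i, p^Y_i)`, and for `p^X_i < p^Y_i`, `p^Y_j < p^X_j` a two-point witness on
`{i, j}` making `p^X_k λ^X_k = p^Y_k λ^Y_k` gives `e(i,j)`.

The upper bound is weak LP duality. With `u_k = min(p^X_k λ^X_k, p^Y_k λ^Y_k)` we have
`Σ u_k / p^X_k ≤ 1` and `Σ u_k / p^Y_k ≤ 1`, so `Σ u_k ≤ M` as soon as some `t ∈ [0, 1]`
satisfies `1/M ≤ t / p^X_k + (1 - t) / p^Y_k` for all `k`. Each `k` with `p^X_k ≠ p^Y_k`
bounds `t` from one side, and the bound from `i` (`p^X_i < p^Y_i`) lies below the bound from `j`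
(`p^Y_j < p^X_j`) exactly when `e(i,j) ≤ M`. Pairs outside `S` have `e(i,j) ≤ e_1`.
-/

open MeasureTheory ProbabilityTheory Filter Finset Topology

noncomputable section

attribute [local instance] Classical.propDecidable

lemma exists_weight_le_convex_comb {ι : Type*} {a b : ι → ℝ} {c : ℝ}
    (hmax : ∀ i, c ≤ max (a i) (b i))
    (hpair : ∀ i j, b i < a i → a j < b j → (c - b i) * (b j - a j) ≤ (b j - c) * (a i - b i)) :
    ∃ t ∈ Set.Icc (0 : ℝ) 1, ∀ i, c ≤ t * a i + (1 - t) * b i := by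
  -- `t` must lie above `(c - b i) / (a i - b i)` where `b i < a i`
  -- and below `(b j - c) / (b j - a j)` where `a j < b j`.
  obtain ⟨t, ht_lower, ht_upper⟩ := exists_between_of_forall_le
    (s := insert 0 ((fun i => (c - b i) / (a i - b i)) '' {i | b i < a i}))
    (t := insert 1 ((fun j => (b j - c) / (b j - a j)) '' {j | a j < b j}))
    (Set.insert_nonempty _ _) (Set.insert_nonempty _ _) (by
      rintro x (rfl | ⟨i, hi : b i < a i, rfl⟩) y (rfl | ⟨j, hj : a j < b j, rfl⟩)
      · exact zero_le_one
      · have hcj : c ≤ b j := (max_eq_right hj.le) ▸ hmax j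
        exact div_nonneg (sub_nonneg.2 hcj) (sub_nonneg.2 hj.le)
      · have hci : c ≤ a i := (max_eq_left hi.le) ▸ hmax i
        exact div_le_one_of_le₀ (sub_le_sub_right hci _) (sub_nonneg.2 hi.le)
      · rw [div_le_div_iff₀ (sub_pos.2 hi) (sub_pos.2 hj)]
        exact hpair i j hi hj)
  refine ⟨t, ⟨ht_lower (Set.mem_insert _ _), ht_upper (Set.mem_insert _ _)⟩, fun i => ?_⟩
  rcases lt_trichotomy (a i) (b i) with hi | hi | hi
  · have := ht_upper (Set.mem_insert_of_mem _ ⟨i, hi, rfl⟩)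
    rw [le_div_iff₀ (sub_pos.2 hi)] at this
    linarith
  · calc c ≤ b i := by simpa [hi] using hmax i
      _ = t * a i + (1 - t) * b i := by rw [hi]; ring
  · have := ht_lower (Set.mem_insert_of_mem _ ⟨i, hi, rfl⟩)
    rw [div_le_iff₀ (sub_pos.2 hi)] at this
    linarith

section Representation

variable {m : ℕ}

lemma le_one_of_mem_Lam {l : Fin m → ℝ} (hl : l ∈ Lam m) (i : Fin m) : l i ≤ 1 :=
  hl.2 ▸ Finset.single_le_sum (fun j _ => hl.1 j) (Finset.mem_univ i)

lemma single_add_single_mem_Lam (i j : Fin m) {a b : ℝ} (ha : 0 ≤ a) (hb : 0 ≤ b)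
    (hab : a + b = 1) : Pi.single i a + Pi.single j b ∈ Lam m :=
  ⟨fun k => by
    simp only [Pi.add_apply, Pi.single_apply]
    split_ifs <;> linarith, by
    simp [Finset.sum_add_distrib, hab]⟩

lemma min_le_e1 (pX pY : Fin m → ℝ) (i : Fin m) : min (pX i) (pY i) ≤ e1 pX pY :=
  le_ciSup (Set.finite_range fun k => min (pX k) (pY k)).bddAbove i

variable {pX pY : Fin m → ℝ} (hpX : ∀ i, 0 < pX i) (hpY : ∀ i, 0 < pY i)

include hpX

lemma bddAbove_fobj_image : BddAbove (fobj pX pY '' (Lam m ×ˢ Lam m)) := by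
  refine ⟨∑ i, pX i, Set.forall_mem_image.2 fun l hl => Finset.sum_le_sum fun i _ => ?_⟩
  exact (min_le_left _ _).trans (mul_le_of_le_one_right (hpX i).le (le_one_of_mem_Lam hl.1 i))

lemma fobj_le_emax {l : (Fin m → ℝ) × (Fin m → ℝ)} (hl : l ∈ Lam m ×ˢ Lam m) :
    fobj pX pY l ≤ emax pX pY :=
  le_csSup (bddAbove_fobj_image hpX) (Set.mem_image_of_mem _ hl)

lemma min_le_emax (i : Fin m) : min (pX i) (pY i) ≤ emax pX pY := by
  have hl : Pi.single i 1 ∈ Lam m := by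
    simpa using single_add_single_mem_Lam i i zero_le_one le_rfl (add_zero 1)
  have hval : fobj pX pY (Pi.single i 1, Pi.single i 1) = min (pX i) (pY i) := by
    rw [fobj, Fintype.sum_eq_single i fun k hk => by simp [hk]]
    simp
  exact hval ▸ fobj_le_emax hpX ⟨hl, hl⟩

include hpY

lemma eij_denom_pos {i j : Fin m} (hi : pX i < pY i) (hj : pY j < pX j) :
    0 < pY i * pX j - pX i * pY j := by
  nlinarith [hpX i, hpY j]

lemma eij_le_of_le_left {i j : Fin m} (hi : pX i < pY i) (hj : pY j < pX j)
    (h : pX j ≤ pX i) : eij pX pY i j ≤ pX i := by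
  rw [eij, div_le_iff₀ (eij_denom_pos hpX hpY hi hj)]
  nlinarith [mul_nonneg (mul_nonneg (hpY j).le (sub_nonneg.2 h)) (sub_pos.2 hi).le]

lemma eij_le_of_le_right {i j : Fin m} (hi : pX i < pY i) (hj : pY j < pX j)
    (h : pY i ≤ pY j) : eij pX pY i j ≤ pY j := by
  rw [eij, div_le_iff₀ (eij_denom_pos hpX hpY hi hj)]
  nlinarith [mul_nonneg (mul_nonneg (hpX i).le (sub_nonneg.2 h)) (sub_pos.2 hj).le]

lemma e1_pos [Nonempty (Fin m)] : 0 < e1 pX pY :=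
  let i := Classical.arbitrary (Fin m)
  (lt_min (hpX i) (hpY i)).trans_le (min_le_e1 pX pY i)

lemma eij_le_e1_of_notMem_Sset {i j : Fin m} (hi : pX i < pY i) (hj : pY j < pX j)
    (hS : (i, j) ∉ Sset pX pY) : eij pX pY i j ≤ e1 pX pY := by
  rcases le_or_gt (pX j) (pX i) with hX | hX
  · calc eij pX pY i j ≤ min (pX i) (pY i) := by
          rw [min_eq_left hi.le]; exact eij_le_of_le_left hpX hpY hi hj hX
      _ ≤ e1 pX pY := min_le_e1 pX pY i
  · have hY : pY i ≤ pY j := not_lt.1 fun hY => hS ⟨hX, hY, hi, hj⟩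
    calc eij pX pY i j ≤ min (pX j) (pY j) := by
          rw [min_eq_right hj.le]; exact eij_le_of_le_right hpX hpY hi hj hY
      _ ≤ e1 pX pY := min_le_e1 pX pY j

/-- In reciprocal coordinates, `e(i,j) ≤ M` says that the lower constraint on the weight `t`
coming from `i` lies below the upper one coming from `j`. -/
lemma inv_sub_mul_le_of_eij_le {M : ℝ} (hM : 0 < M) {i j : Fin m} (hi : pX i < pY i)
    (hj : pY j < pX j) (h : eij pX pY i j ≤ M) :
    (M⁻¹ - (pY i)⁻¹) * ((pY j)⁻¹ - (pX j)⁻¹) ≤ ((pY j)⁻¹ - M⁻¹) * ((pX i)⁻¹ - (pY i)⁻¹) := by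
  rw [eij, div_le_iff₀ (eij_denom_pos hpX hpY hi hj)] at h
  have hpos : 0 < M * (pX i * pY i * pX j * pY j) := by
    have := hpX i; have := hpY i; have := hpX j; have := hpY j; positivity
  have hdiff : ((pY j)⁻¹ - M⁻¹) * ((pX i)⁻¹ - (pY i)⁻¹) - (M⁻¹ - (pY i)⁻¹) * ((pY j)⁻¹ - (pX j)⁻¹)
      = (M * (pY i * pX j - pX i * pY j)
          - (pX i * pY i * (pX j - pY j) + pX j * pY j * (pY i - pX i))) /
        (M * (pX i * pY i * pX j * pY j)) := by
    have := (hpX i).ne'; have := (hpY i).ne'; have := (hpX j).ne'; have := (hpY j).ne'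
    field_simp
    ring
  exact sub_nonneg.1 (hdiff ▸ div_nonneg (by linarith) hpos.le)

lemma fobj_le_of_dual {M : ℝ} (hM : 0 < M) (hmin : ∀ i, min (pX i) (pY i) ≤ M)
    (hpair : ∀ i j, pX i < pY i → pY j < pX j → eij pX pY i j ≤ M)
    {l : (Fin m → ℝ) × (Fin m → ℝ)} (hl : l ∈ Lam m ×ˢ Lam m) : fobj pX pY l ≤ M := by
  obtain ⟨⟨hl₁, hsum₁⟩, ⟨hl₂, hsum₂⟩⟩ := hl
  obtain ⟨t, ⟨ht₀, ht₁⟩, ht⟩ := exists_weight_le_convex_comb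
    (a := fun i => (pX i)⁻¹) (b := fun i => (pY i)⁻¹) (c := M⁻¹)
    (fun i => (min_le_iff.1 (hmin i)).elim
      (fun h => (inv_anti₀ (hpX i) h).trans (le_max_left _ _))
      (fun h => (inv_anti₀ (hpY i) h).trans (le_max_right _ _)))
    (fun i j hi hj => by
      rw [inv_lt_inv₀ (hpY i) (hpX i)] at hi
      rw [inv_lt_inv₀ (hpX j) (hpY j)] at hj
      exact inv_sub_mul_le_of_eij_le hpX hpY hM hi hj (hpair i j hi hj))
  have hterm : ∀ k, M⁻¹ * min (pX k * l.1 k) (pY k * l.2 k) ≤ t * l.1 k + (1 - t) * l.2 k := by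
    intro k
    set u := min (pX k * l.1 k) (pY k * l.2 k)
    have hu : 0 ≤ u := le_min (mul_nonneg (hpX k).le (hl₁ k)) (mul_nonneg (hpY k).le (hl₂ k))
    calc M⁻¹ * u ≤ (t * (pX k)⁻¹ + (1 - t) * (pY k)⁻¹) * u := mul_le_mul_of_nonneg_right (ht k) hu
      _ = t * (u / pX k) + (1 - t) * (u / pY k) := by ring
      _ ≤ t * l.1 k + (1 - t) * l.2 k := by
        gcongr
        · exact (div_le_iff₀' (hpX k)).2 (min_le_left _ _)
        · exact (div_le_iff₀' (hpY k)).2 (min_le_right _ _)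
  have hdual : M⁻¹ * fobj pX pY l ≤ 1 := calc
    M⁻¹ * fobj pX pY l ≤ ∑ k, (t * l.1 k + (1 - t) * l.2 k) := by
      rw [fobj, Finset.mul_sum]
      exact Finset.sum_le_sum fun k _ => hterm k
    _ = 1 := by rw [Finset.sum_add_distrib, ← Finset.mul_sum, ← Finset.mul_sum, hsum₁, hsum₂]; ring
  rwa [inv_mul_le_iff₀ hM, mul_one] at hdual

lemma eij_le_emax {i j : Fin m} (hi : pX i < pY i) (hj : pY j < pX j) :
    eij pX pY i j ≤ emax pX pY := by
  have hij : i ≠ j := by rintro rfl; exact lt_asymm hi hj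
  have hD := eij_denom_pos hpX hpY hi hj
  set D := pY i * pX j - pX i * pY j with hD_def
  set wi := pX j - pY j with hwi_def
  set wj := pY i - pX i with hwj_def
  have hwi : 0 < wi := sub_pos.2 hj
  have hwj : 0 < wj := sub_pos.2 hi
  -- The witness balances both minima, `pX k * lX k = pY k * lY k` for `k = i, j`.
  set lX : Fin m → ℝ := Pi.single i (pY i * wi / D) + Pi.single j (pY j * wj / D) with hlX
  set lY : Fin m → ℝ := Pi.single i (pX i * wi / D) + Pi.single j (pX j * wj / D) with hlY
  have hX : lX ∈ Lam m := by
    refine single_add_single_mem_Lam i j (by have := hpY i; positivity)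
      (by have := hpY j; positivity) ?_
    rw [← add_div, div_eq_one_iff_eq hD.ne', hD_def, hwi_def, hwj_def]
    ring
  have hY : lY ∈ Lam m := by
    refine single_add_single_mem_Lam i j (by have := hpX i; positivity)
      (by have := hpX j; positivity) ?_
    rw [← add_div, div_eq_one_iff_eq hD.ne', hD_def, hwi_def, hwj_def]
    ring
  have hbalanced : ∀ k w, min (pX k * (pY k * w / D)) (pY k * (pX k * w / D))
      = pX k * pY k * w / D := fun k w => by
    rw [show pY k * (pX k * w / D) = pX k * (pY k * w / D) by ring, min_self]
    ring
  have hval : fobj pX pY (lX, lY) = eij pX pY i j := by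
    rw [fobj, Fintype.sum_eq_add i j hij fun k hk => by simp [hlX, hlY, hk.1, hk.2]]
    simp only [hlX, hlY, Pi.add_apply, Pi.single_eq_same, Pi.single_eq_of_ne hij,
      Pi.single_eq_of_ne hij.symm, add_zero, zero_add, hbalanced]
    rw [eij, ← add_div]
  exact hval ▸ fobj_le_emax hpX ⟨hX, hY⟩

theorem emax_eq_max_e1_e2 [Nonempty (Fin m)] : emax pX pY = max (e1 pX pY) (e2 pX pY) := by
  have he1_pos := e1_pos hpX hpY
  have he1 : e1 pX pY ≤ emax pX pY := ciSup_le (min_le_emax hpX)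
  have he2 : e2 pX pY ≤ emax pX pY :=
    Real.sSup_le (Set.forall_mem_image.2 fun ij hij => eij_le_emax hpX hpY hij.2.2.1 hij.2.2.2)
      (he1_pos.le.trans he1)
  refine le_antisymm (Real.sSup_le (Set.forall_mem_image.2 fun l hl => ?_)
    (he1_pos.le.trans (le_max_left _ _))) (max_le he1 he2)
  refine fobj_le_of_dual hpX hpY (he1_pos.trans_le (le_max_left _ _))
    (fun i => (min_le_e1 pX pY i).trans (le_max_left _ _)) (fun i j hi hj => ?_) hl
  by_cases hS : (i, j) ∈ Sset pX pY
  · have he2 : eij pX pY i j ≤ e2 pX pY :=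
      le_csSup ((Set.toFinite _).image _).bddAbove ⟨(i, j), hS, rfl⟩
    exact he2.trans (le_max_right _ _)
  · exact (eij_le_e1_of_notMem_Sset hpX hpY hi hj hS).trans (le_max_left _ _)

end Representation

theorem emax_representation_general
    (m : ℕ) (hm : 2 ≤ m)
    (pX pY : Fin m → ℝ)
    (hpX : ∀ i, 0 < pX i) (hpY : ∀ i, 0 < pY i) :
    (Sset pX pY = ∅ → emax pX pY = e1 pX pY) ∧
      ((Sset pX pY).Nonempty → emax pX pY = max (e1 pX pY) (e2 pX pY)) := by
  have : Nonempty (Fin m) := ⟨⟨0, by omega⟩⟩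
  refine ⟨fun hS => ?_, fun _ => emax_eq_max_e1_e2 hpX hpY⟩
  rw [emax_eq_max_e1_e2 hpX hpY, e2, hS, Set.image_empty, Real.sSup_empty,
    max_eq_left (e1_pos hpX hpY).le]

/-- The representation of `e_max`:
`e_max = max (max_i min(p^X_i, p^Y_i)) (max_{(i,j)∈S} e(i,j))`, and when `S = ∅`,
`e_max = max_i min(p^X_i, p^Y_i)`. -/
theorem emax_representation
    (m : ℕ) (hm : 2 ≤ m)
    (pX pY : Fin m → ℝ)
    (hpX : ∀ i, 0 < pX i) (hpY : ∀ i, 0 < pY i)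
    (hpXsum : ∑ i, pX i = 1) (hpYsum : ∑ i, pY i = 1) :
    (Sset pX pY = ∅ → emax pX pY = e1 pX pY) ∧
      ((Sset pX pY).Nonempty → emax pX pY = max (e1 pX pY) (e2 pX pY)) :=
  emax_representation_general m hm pX pY hpX hpY

end
end

section
/- One has max_{1≤i≤m} min(p^X_i, p^Y_i) ≤ e_max ≤ min( max_{1≤i≤m} p^X_i, max_{1≤i≤m} p^Y_i ). -/
open MeasureTheory ProbabilityTheory Filter Finset Topology

noncomputable section

attribute [local instance] Classical.propDecidable

/-- `max_i min(p^X_i, p^Y_i) ≤ e_max ≤ min (max_i p^X_i) (max_i p^Y_i)`. -/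
theorem emax_bounds
    (m : ℕ) (hm : 2 ≤ m)
    (pX pY : Fin m → ℝ)
    (hpX : ∀ i, 0 < pX i) (hpY : ∀ i, 0 < pY i)
    (hpXsum : ∑ i, pX i = 1) (hpYsum : ∑ i, pY i = 1) :
    (⨆ i, min (pX i) (pY i)) ≤ emax pX pY ∧
      emax pX pY ≤ min (⨆ i, pX i) (⨆ i, pY i) := by
  haveI : Nonempty (Fin m) := ⟨⟨0, by omega⟩⟩
  -- every value of fobj on the product simplex is ≤ ∑ p * l for either coordinate
  have hub : ∀ z ∈ fobj pX pY '' (Lam m ×ˢ Lam m),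
      z ≤ min (⨆ i, pX i) (⨆ i, pY i) := by
    rintro z ⟨l, ⟨hl1, hl2⟩, rfl⟩
    obtain ⟨h1nn, h1s⟩ := hl1
    obtain ⟨h2nn, h2s⟩ := hl2
    refine le_min ?_ ?_
    · calc fobj pX pY l ≤ ∑ i, (⨆ j, pX j) * l.1 i := by
            refine Finset.sum_le_sum fun i _ => ?_
            exact le_trans (min_le_left _ _)
              (mul_le_mul_of_nonneg_right
                (le_ciSup (Set.Finite.bddAbove (Set.finite_range pX)) i) (h1nn i))
        _ = (⨆ j, pX j) := by rw [← Finset.mul_sum, h1s, mul_one]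
    · calc fobj pX pY l ≤ ∑ i, (⨆ j, pY j) * l.2 i := by
            refine Finset.sum_le_sum fun i _ => ?_
            exact le_trans (min_le_right _ _)
              (mul_le_mul_of_nonneg_right
                (le_ciSup (Set.Finite.bddAbove (Set.finite_range pY)) i) (h2nn i))
        _ = (⨆ j, pY j) := by rw [← Finset.mul_sum, h2s, mul_one]
  have hbdd : BddAbove (fobj pX pY '' (Lam m ×ˢ Lam m)) :=
    ⟨min (⨆ i, pX i) (⨆ i, pY i), hub⟩
  constructor
  · refine ciSup_le fun i => ?_
    -- delta vector at i
    set d : Fin m → ℝ := fun j => if j = i then 1 else 0 with hd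
    have hdLam : d ∈ Lam m := by
      constructor
      · intro j; by_cases h : j = i <;> simp [hd, h]
      · simp [hd]
    have hval : fobj pX pY (d, d) = min (pX i) (pY i) := by
      unfold fobj
      rw [Finset.sum_eq_single i]
      · simp [hd]
      · intro j _ hj; simp [hd, hj]
      · intro h; exact absurd (Finset.mem_univ i) h
    have hmem : min (pX i) (pY i) ∈ fobj pX pY '' (Lam m ×ˢ Lam m) :=
      ⟨(d, d), ⟨hdLam, hdLam⟩, hval⟩
    exact le_csSup hbdd hmem
  · exact csSup_le (Set.Nonempty.image _ ⟨((fun j => if j = (⟨0, by omega⟩ : Fin m) then 1 else 0), (fun j => if j = (⟨0, by omega⟩ : Fin m) then 1 else 0)), by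
      constructor <;>
        exact ⟨fun j => by by_cases h : j = (⟨0, by omega⟩ : Fin m) <;> simp [h], by simp⟩⟩) hub

end
end

section
/- If e_1 ≥ e_2 (or the set S defining e_2 is empty) and there exists i ∈ {1,…,m} with min(p^X_i, p^Y_i) = e_1 and p^X_i ≠ p^Y_i, then Case a) holds or its symmetric version holds, i.e. there exists u ∈ L_U with Σ_i u_i/p^X_i = 1 and Σ_i u_i/p^Y_i < 1, or there exists u ∈ L_U with Σ_i u_i/p^Y_i = 1 and Σ_i u_i/p^X_i < 1. -/
open MeasureTheory ProbabilityTheory Filter Finset Topology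

noncomputable section

attribute [local instance] Classical.propDecidable

-- cross inequality
lemma cross_ineq_s17 {m : ℕ} [Nonempty (Fin m)] (pX pY : Fin m → ℝ)
    (hpX : ∀ i, 0 < pX i) (hpY : ∀ i, 0 < pY i)
    (hge : Sset pX pY = ∅ ∨ e2 pX pY ≤ e1 pX pY)
    (i j : Fin m) (hij1 : pX i < pY i) (hij2 : pY j < pX j) :
    pX i * (pY i - e1 pX pY) / (pY i - pX i) ≤
      pX j * (e1 pX pY - pY j) / (pX j - pY j) := by
  set e := e1 pX pY with he
  have hmin : ∀ k, min (pX k) (pY k) ≤ e :=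
    fun k => le_ciSup (f := fun k => min (pX k) (pY k)) (Set.Finite.bddAbove (Set.finite_range _)) k
  have hD : 0 < pY i * pX j - pX i * pY j := by
    nlinarith [mul_lt_mul_of_pos_right hij1 (hpY j), mul_lt_mul_of_pos_left hij2 (hpY i)]
  have hkey : pX i * pY i * (pX j - pY j) + pX j * pY j * (pY i - pX i) ≤
      e * (pY i * pX j - pX i * pY j) := by
    by_cases hc1 : pX j ≤ pX i
    · have hXe : pX i ≤ e := by simpa [min_eq_left hij1.le] using hmin i
      have hfac : 0 ≤ pY j * ((pX i - pX j) * (pY i - pX i)) :=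
        mul_nonneg (hpY j).le (mul_nonneg (by linarith) (by linarith))
      nlinarith [mul_le_mul_of_nonneg_right hXe hD.le]
    · by_cases hc2 : pY i ≤ pY j
      · have hYe : pY j ≤ e := by simpa [min_eq_right hij2.le] using hmin j
        have hfac : 0 ≤ pX i * ((pY j - pY i) * (pX j - pY j)) :=
          mul_nonneg (hpX i).le (mul_nonneg (by linarith) (by linarith))
        nlinarith [mul_le_mul_of_nonneg_right hYe hD.le]
      · push_neg at hc1 hc2
        have hS : (i, j) ∈ Sset pX pY := ⟨hc1, hc2, hij1, hij2⟩
        rcases hge with h | h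
        · rw [h] at hS; exact absurd hS (Set.notMem_empty _)
        · have h1 : eij pX pY i j ≤ e2 pX pY :=
            le_csSup ((Set.toFinite _).bddAbove) ⟨(i, j), hS, rfl⟩
          have heij : eij pX pY i j ≤ e := le_trans h1 h
          unfold eij at heij
          exact (div_le_iff₀ hD).mp heij
  rw [div_le_div_iff₀ (by linarith) (by linarith)]
  nlinarith [hkey]

lemma dual_exists {m : ℕ} [Nonempty (Fin m)] (pX pY : Fin m → ℝ)
    (hpX : ∀ i, 0 < pX i) (hpY : ∀ i, 0 < pY i)
    (hge : Sset pX pY = ∅ ∨ e2 pX pY ≤ e1 pX pY) :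
    ∃ y1 y2 : ℝ, 0 ≤ y1 ∧ 0 ≤ y2 ∧ y1 + y2 = e1 pX pY ∧
      ∀ k, pX k * pY k ≤ y1 * pY k + y2 * pX k := by
  set e := e1 pX pY with he
  have hmin : ∀ k, min (pX k) (pY k) ≤ e :=
    fun k => le_ciSup (f := fun k => min (pX k) (pY k))
      (Set.Finite.bddAbove (Set.finite_range _)) k
  obtain ⟨i0⟩ := (inferInstance : Nonempty (Fin m))
  have hepos : 0 < e :=
    lt_of_lt_of_le (lt_min (hpX i0) (hpY i0)) (hmin i0)
  set T : Fin m → ℝ := fun i =>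
    if pX i < pY i then max 0 (pX i * (pY i - e) / (pY i - pX i)) else 0 with hT
  set y1 := Finset.univ.sup' Finset.univ_nonempty T with hy1def
  have hT0 : ∀ i, 0 ≤ T i := by
    intro i; rw [hT]; dsimp only; split
    · exact le_max_left _ _
    · exact le_refl _
  have hy1nn : 0 ≤ y1 := le_trans (hT0 i0) (Finset.le_sup' T (Finset.mem_univ i0))
  have hTe : ∀ i, T i ≤ e := by
    intro i; rw [hT]; dsimp only; split
    · rename_i h
      have hXe : pX i ≤ e := by simpa [min_eq_left h.le] using hmin i
      refine max_le hepos.le ?_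
      rw [div_le_iff₀ (by linarith)]
      nlinarith [mul_le_mul_of_nonneg_right hXe (hpY i).le]
    · exact hepos.le
  have hy1e : y1 ≤ e := Finset.sup'_le _ _ fun i _ => hTe i
  refine ⟨y1, e - y1, hy1nn, by linarith, by ring, ?_⟩
  intro k
  rcases lt_trichotomy (pX k) (pY k) with h | h | h
  · have h1 : pX k * (pY k - e) / (pY k - pX k) ≤ y1 := by
      refine le_trans ?_ (Finset.le_sup' T (Finset.mem_univ k))
      rw [hT]; dsimp only; rw [if_pos h]; exact le_max_right _ _
    have h2 : pX k * (pY k - e) ≤ y1 * (pY k - pX k) :=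
      (div_le_iff₀ (by linarith)).mp h1
    nlinarith
  · have hXe : pX k ≤ e := by simpa [h] using hmin k
    nlinarith [mul_le_mul_of_nonneg_right hXe (hpX k).le]
  · have hYe : pY k ≤ e := by simpa [min_eq_right h.le] using hmin k
    have hsk : 0 ≤ pX k * (e - pY k) / (pX k - pY k) :=
      div_nonneg (mul_nonneg (hpX k).le (by linarith)) (by linarith)
    have h1 : y1 ≤ pX k * (e - pY k) / (pX k - pY k) := by
      refine Finset.sup'_le _ _ fun i _ => ?_
      rw [hT]; dsimp only; split
      · rename_i hi
        exact max_le hsk (cross_ineq_s17 pX pY hpX hpY hge i k hi h)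
      · exact hsk
    have h2 : y1 * (pX k - pY k) ≤ pX k * (e - pY k) :=
      (le_div_iff₀ (by linarith)).mp h1
    nlinarith

lemma fobj_le {m : ℕ} (pX pY : Fin m → ℝ)
    (hpX : ∀ i, 0 < pX i) (hpY : ∀ i, 0 < pY i)
    (y1 y2 : ℝ) (hy1 : 0 ≤ y1) (hy2 : 0 ≤ y2)
    (hfeas : ∀ k, pX k * pY k ≤ y1 * pY k + y2 * pX k)
    (l : (Fin m → ℝ) × (Fin m → ℝ)) (hl : l ∈ Lam m ×ˢ Lam m) :
    fobj pX pY l ≤ y1 + y2 := by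
  obtain ⟨⟨ha0, ha1⟩, hb0, hb1⟩ := hl
  have hstep : ∀ i ∈ Finset.univ, min (pX i * l.1 i) (pY i * l.2 i) ≤
      y1 * l.1 i + y2 * l.2 i := by
    intro i _
    have h0 : 0 ≤ min (pX i * l.1 i) (pY i * l.2 i) :=
      le_min (mul_nonneg (hpX i).le (ha0 i)) (mul_nonneg (hpY i).le (hb0 i))
    have h1 := min_le_left (pX i * l.1 i) (pY i * l.2 i)
    have h2 := min_le_right (pX i * l.1 i) (pY i * l.2 i)
    nlinarith [mul_le_mul_of_nonneg_left (hfeas i) h0,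
      mul_le_mul_of_nonneg_left h1 (mul_nonneg hy1 (hpY i).le),
      mul_le_mul_of_nonneg_left h2 (mul_nonneg hy2 (hpX i).le),
      mul_pos (hpX i) (hpY i)]
  calc fobj pX pY l ≤ ∑ i, (y1 * l.1 i + y2 * l.2 i) := Finset.sum_le_sum hstep
    _ = y1 + y2 := by
        rw [Finset.sum_add_distrib, ← Finset.mul_sum, ← Finset.mul_sum, ha1, hb1,
          mul_one, mul_one]

/-- Criterion: if `e_1 ≥ e_2` (or `S = ∅`) and some `i` with `min(p^X_i, p^Y_i) = e_1`
has `p^X_i ≠ p^Y_i`, then Case a) or its symmetric version holds. -/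
theorem criterion_e1_ge_e2_asym
    (m : ℕ) (hm : 2 ≤ m)
    (pX pY : Fin m → ℝ)
    (hpX : ∀ i, 0 < pX i) (hpY : ∀ i, 0 < pY i)
    (hpXsum : ∑ i, pX i = 1) (hpYsum : ∑ i, pY i = 1)
    (hge : Sset pX pY = ∅ ∨ e2 pX pY ≤ e1 pX pY)
    (hi : ∃ i, min (pX i) (pY i) = e1 pX pY ∧ pX i ≠ pY i) :
    (∃ u ∈ LU pX pY, (∑ i, u i / pX i) = 1 ∧ (∑ i, u i / pY i) < 1) ∨
      (∃ u ∈ LU pX pY, (∑ i, u i / pY i) = 1 ∧ (∑ i, u i / pX i) < 1) := by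
  haveI : Nonempty (Fin m) := ⟨⟨0, by omega⟩⟩
  obtain ⟨i, hie, hne⟩ := hi
  set e := e1 pX pY with he
  have hepos : 0 < e := hie ▸ lt_min (hpX i) (hpY i)
  obtain ⟨y1, y2, hy1, hy2, hysum, hfeas⟩ := dual_exists pX pY hpX hpY hge
  set δ : Fin m → ℝ := fun j => if j = i then 1 else 0 with hδ
  have hδLam : δ ∈ Lam m := by
    constructor
    · intro j; rw [hδ]; dsimp only; split <;> norm_num
    · rw [hδ]; simp
  have hub : ∀ r ∈ fobj pX pY '' (Lam m ×ˢ Lam m), r ≤ e := by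
    rintro r ⟨l, hl, rfl⟩
    rw [he, ← hysum]
    exact fobj_le pX pY hpX hpY y1 y2 hy1 hy2 hfeas l hl
  have hδval : fobj pX pY (δ, δ) = e := by
    rw [fobj]
    rw [Finset.sum_eq_single i]
    · rw [hδ]; dsimp only; rw [if_pos rfl, mul_one, mul_one]; exact hie
    · intro j _ hj
      rw [hδ]; dsimp only; rw [if_neg hj]; simp
    · intro h; exact absurd (Finset.mem_univ i) h
  have hδmem : fobj pX pY (δ, δ) ∈ fobj pX pY '' (Lam m ×ˢ Lam m) :=
    ⟨(δ, δ), ⟨hδLam, hδLam⟩, rfl⟩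
  have hemax : emax pX pY = e := by
    refine le_antisymm (csSup_le ⟨_, hδmem⟩ hub) ?_
    rw [← hδval]
    exact le_csSup ⟨e, hub⟩ hδmem
  set u : Fin m → ℝ := fun j => if j = i then e else 0 with hu
  have hunn : ∀ j, 0 ≤ u j := by
    intro j; rw [hu]; dsimp only; split
    · exact hepos.le
    · exact le_refl _
  have husum : ∑ j, u j = e := by rw [hu]; simp
  have hsX : ∑ j, u j / pX j = e / pX i := by
    rw [Finset.sum_eq_single i]
    · rw [hu]; simp
    · intro j _ hj; rw [hu]; dsimp only; rw [if_neg hj, zero_div]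
    · intro h; exact absurd (Finset.mem_univ i) h
  have hsY : ∑ j, u j / pY j = e / pY i := by
    rw [Finset.sum_eq_single i]
    · rw [hu]; simp
    · intro j _ hj; rw [hu]; dsimp only; rw [if_neg hj, zero_div]
    · intro h; exact absurd (Finset.mem_univ i) h
  rcases hne.lt_or_gt with h | h
  · have heX : e = pX i := by rw [← hie, min_eq_left h.le]
    have h1 : ∑ j, u j / pX j = 1 := by rw [hsX, heX, div_self (hpX i).ne']
    have h2 : ∑ j, u j / pY j < 1 := by
      rw [hsY, heX]; exact (div_lt_one (hpY i)).mpr h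
    exact Or.inl ⟨u, ⟨⟨hunn, h1.le, h2.le⟩, husum.trans hemax.symm⟩, h1, h2⟩
  · have heY : e = pY i := by rw [← hie, min_eq_right h.le]
    have h1 : ∑ j, u j / pY j = 1 := by rw [hsY, heY, div_self (hpY i).ne']
    have h2 : ∑ j, u j / pX j < 1 := by
      rw [hsX, heY]; exact (div_lt_one (hpX i)).mpr h
    exact Or.inr ⟨u, ⟨⟨hunn, h2.le, h1.le⟩, husum.trans hemax.symm⟩, h1, h2⟩

end
end
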